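/- arXiv:0805.3620 — 4 statements merged into one kernel-verified Lean document; each statement's English description precedes it below -/
import Mathlib

section
/- Let π : ℕ → [0,1] be a sequence satisfying π_{m+n} ≥ π_m · π_n · c^{(m+n)^{3/4} log₂(m+n)} for all sufficiently large m, n, where 0 < c < 1, and suppose π_n > 0 for all large n. Then the limit lim_{n→∞} (−(1/n) log π_n) exists in [0, ∞]. -/
/-!
With `a n = -log π n` the hypothesis says `a (p + q) ≤ a p + a q + C (p + q)^θ` with `θ = 7/8`,
since `log₂ N ≤ (8 / log 2) N^{1/8}`. For such sequences the potential `a n + E n^θ` is exactly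
subadditive on balanced splits (`u, v ≤ 2·min(u,v)`): concavity gives
`u^θ + v^θ ≥ (2/3)^{θ-1} (u+v)^θ`, and `(2/3)^{θ-1} > 1` absorbs the error when `E` is large.
Halving repeatedly gives `a (q n) / (q n) ≤ a n / n + E n^{θ-1}` for every `q`, and writing
`N = q n + s` with `n ≤ s < 2n` costs one more error `C N^θ = o(N)`. Hence
`limsup a N / N ≤ a n / n + E n^{θ-1}` for every large `n`, so `limsup ≤ liminf`.
-/

open Filter Topology

theorem tendsto_natCast_rpow_div_natCast {θ : ℝ} (hθ : θ < 1) :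
    Tendsto (fun n : ℕ => (n : ℝ) ^ θ / n) atTop (𝓝 0) := by
  have h := (tendsto_rpow_neg_atTop (sub_pos.2 hθ)).comp tendsto_natCast_atTop_atTop
  refine h.congr' ?_
  filter_upwards [eventually_gt_atTop 0] with n hn
  rw [Function.comp_apply, neg_sub, Real.rpow_sub_one (by positivity)]

theorem mul_rpow_le_rpow_of_le_two_thirds {θ t : ℝ} (hθ : θ ≤ 1) (ht : 0 < t) (ht' : t ≤ 2 / 3) :
    (2 / 3 : ℝ) ^ (θ - 1) * t ≤ t ^ θ := by
  calc (2 / 3 : ℝ) ^ (θ - 1) * t ≤ t ^ (θ - 1) * t :=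
        mul_le_mul_of_nonneg_right (Real.rpow_le_rpow_of_nonpos ht ht' (by linarith)) ht.le
    _ = t ^ θ := by rw [Real.rpow_sub_one ht.ne', div_mul_cancel₀ _ ht.ne']

theorem mul_add_rpow_le_rpow_add_rpow {θ u v : ℝ} (hθ : θ ≤ 1) (hu : 0 < u) (hv : 0 < v)
    (huv : u ≤ 2 * v) (hvu : v ≤ 2 * u) :
    (2 / 3 : ℝ) ^ (θ - 1) * (u + v) ^ θ ≤ u ^ θ + v ^ θ := by
  have hs : 0 < u + v := by positivity
  have hpart : ∀ x, 0 < x → x ≤ 2 / 3 * (u + v) →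
      (2 / 3 : ℝ) ^ (θ - 1) * (x / (u + v)) * (u + v) ^ θ ≤ x ^ θ := by
    intro x hx hx'
    calc (2 / 3 : ℝ) ^ (θ - 1) * (x / (u + v)) * (u + v) ^ θ
        ≤ (x / (u + v)) ^ θ * (u + v) ^ θ := by
          gcongr
          exact mul_rpow_le_rpow_of_le_two_thirds hθ (by positivity) (by rwa [div_le_iff₀ hs])
      _ = x ^ θ := by rw [Real.div_rpow hx.le hs.le, div_mul_cancel₀ _ (by positivity)]
  have h := add_le_add (hpart u hu (by linarith)) (hpart v hv (by linarith))
  rwa [← add_mul, ← mul_add, ← add_div, div_self hs.ne', mul_one] at h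

theorem apply_mul_le_of_subadditive_of_balanced {φ : ℕ → ℝ} {m : ℕ}
    (hφ : ∀ u v, m ≤ u → m ≤ v → u ≤ 2 * v → v ≤ 2 * u → φ (u + v) ≤ φ u + φ v)
    {n : ℕ} (hn : m ≤ n) (q : ℕ) (hq : 0 < q) : φ (q * n) ≤ q * φ n := by
  induction q using Nat.strong_induction_on with
  | _ q ih =>
    obtain rfl | hq2 : q = 1 ∨ 2 ≤ q := by omega
    · simp
    have hhalf : 0 < q / 2 := by omega
    have hsplit : q * n = q / 2 * n + (q - q / 2) * n := by
      rw [← add_mul, Nat.add_sub_cancel' (Nat.div_le_self q 2)]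
    calc φ (q * n) ≤ φ (q / 2 * n) + φ ((q - q / 2) * n) := by
          rw [hsplit]
          apply hφ
          · exact hn.trans (Nat.le_mul_of_pos_left n hhalf)
          · exact hn.trans (Nat.le_mul_of_pos_left n (by omega))
          · rw [← mul_assoc]; exact Nat.mul_le_mul_right n (by omega)
          · rw [← mul_assoc]; exact Nat.mul_le_mul_right n (by omega)
      _ ≤ (q / 2 : ℕ) * φ n + (q - q / 2 : ℕ) * φ n :=
          add_le_add (ih _ (by omega) hhalf) (ih _ (by omega) (by omega))
      _ = q * φ n := by
          rw [← add_mul, ← Nat.cast_add, Nat.add_sub_cancel' (Nat.div_le_self q 2)]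

def ApproxSubadditive (a : ℕ → ℝ) (m : ℕ) (C θ : ℝ) : Prop :=
  ∀ p q, m ≤ p → m ≤ q → a (p + q) ≤ a p + a q + C * ((p + q : ℕ) : ℝ) ^ θ

namespace ApproxSubadditive

variable {a : ℕ → ℝ} {m : ℕ} {C θ : ℝ}

theorem exists_balanced_subadditive_add_rpow (hsub : ApproxSubadditive a m C θ) (hm : 0 < m)
    (hC : 0 ≤ C) (hθ : θ < 1) :
    ∃ E, 0 ≤ E ∧ ∀ u v, m ≤ u → m ≤ v → u ≤ 2 * v → v ≤ 2 * u →
      a (u + v) + E * ((u + v : ℕ) : ℝ) ^ θ ≤ (a u + E * (u : ℝ) ^ θ) + (a v + E * (v : ℝ) ^ θ) := by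
  set κ := (2 / 3 : ℝ) ^ (θ - 1)
  have hκ : 1 < κ :=
    Real.one_lt_rpow_of_pos_of_lt_one_of_neg (by norm_num) (by norm_num) (by linarith)
  set E := C / (κ - 1) with hE_def
  have hE : C + E = E * κ := by
    rw [hE_def]
    field_simp [(by linarith : κ - 1 ≠ 0)]
    ring
  refine ⟨E, div_nonneg hC (by linarith), fun u v hu hv huv hvu => ?_⟩
  have hconc := mul_add_rpow_le_rpow_add_rpow hθ.le (u := u) (v := v)
    (by exact_mod_cast hm.trans_le hu) (by exact_mod_cast hm.trans_le hv)
    (by exact_mod_cast huv) (by exact_mod_cast hvu)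
  calc a (u + v) + E * ((u + v : ℕ) : ℝ) ^ θ
      ≤ a u + a v + (C + E) * ((u + v : ℕ) : ℝ) ^ θ := by linarith [hsub u v hu hv]
    _ ≤ a u + a v + E * ((u : ℝ) ^ θ + (v : ℝ) ^ θ) := by
        rw [hE, mul_assoc, Nat.cast_add]
        gcongr
    _ = _ := by ring

theorem exists_le_mul_add_add_rpow (hsub : ApproxSubadditive a m C θ) {n : ℕ} (hn : m ≤ n)
    (hn0 : 0 < n) {x : ℝ} (hx : ∀ q, 0 < q → a (q * n) ≤ q * n * x) :
    ∃ A, ∀ N, 2 * n ≤ N → a N ≤ N * x + A + C * (N : ℝ) ^ θ := by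
  obtain ⟨A, hA⟩ := ((Set.finite_Iio (2 * n)).image fun s => a s - s * x).bddAbove
  refine ⟨A, fun N hN => ?_⟩
  have hq : 2 ≤ N / n := (Nat.le_div_iff_mul_le hn0).2 (by linarith)
  have hmod : N % n < n := Nat.mod_lt N hn0
  obtain ⟨q, s, hq0, hns, hs2n, rfl⟩ : ∃ q s, 0 < q ∧ n ≤ s ∧ s < 2 * n ∧ N = q * n + s := by
    refine ⟨N / n - 1, n + N % n, by omega, by omega, by omega, ?_⟩
    have hdiv := Nat.div_add_mod' N n
    have hpred : (N / n - 1) * n + n = N / n * n := by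
      rw [Nat.sub_one_mul, Nat.sub_add_cancel (Nat.le_mul_of_pos_left n (by omega))]
    omega
  have hs : a s ≤ s * x + A := by
    have := hA ⟨s, hs2n, rfl⟩
    linarith
  have := hsub (q * n) s (hn.trans (Nat.le_mul_of_pos_left n hq0)) (hn.trans hns)
  have := hx q hq0
  push_cast at *
  linarith

theorem eventually_div_le_add_of_mul_le (hsub : ApproxSubadditive a m C θ) (hθ : θ < 1)
    {n : ℕ} (hn : m ≤ n) (hn0 : 0 < n) {x : ℝ} (hx : ∀ q, 0 < q → a (q * n) ≤ q * n * x)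
    {ε : ℝ} (hε : 0 < ε) : ∀ᶠ N : ℕ in atTop, a N / N ≤ x + ε := by
  obtain ⟨A, hA⟩ := hsub.exists_le_mul_add_add_rpow hn hn0 hx
  have herr : Tendsto (fun N : ℕ => A / N + C * ((N : ℝ) ^ θ / N)) atTop (𝓝 0) := by
    simpa using (tendsto_const_div_atTop_nhds_zero_nat A).add
      ((tendsto_natCast_rpow_div_natCast hθ).const_mul C)
  filter_upwards [herr.eventually (gt_mem_nhds hε), eventually_ge_atTop (2 * n)] with N hNε hN
  have hN0 : (0 : ℝ) < N := by exact_mod_cast (by omega : 0 < N)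
  calc a N / N ≤ (N * x + A + C * (N : ℝ) ^ θ) / N := by gcongr; exact hA N hN
    _ = x + (A / N + C * ((N : ℝ) ^ θ / N)) := by field_simp; ring
    _ ≤ x + ε := by linarith

theorem tendsto_div (hsub : ApproxSubadditive a m C θ) (hC : 0 ≤ C) (hθ : θ < 1)
    (hbdd : IsBoundedUnder (· ≥ ·) atTop fun n => a n / n) :
    ∃ L, Tendsto (fun n => a n / n) atTop (𝓝 L) := by
  replace hsub : ApproxSubadditive a (m + 1) C θ := fun p q hp hq => hsub p q (by omega) (by omega)
  obtain ⟨E, hE, hψ⟩ := hsub.exists_balanced_subadditive_add_rpow m.succ_pos hC hθ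
  have hupper : ∀ n, m + 1 ≤ n → ∀ ε > 0,
      ∀ᶠ N : ℕ in atTop, a N / N ≤ a n / n + E * ((n : ℝ) ^ θ / n) + ε := by
    intro n hn ε hε
    have hn0 : (0 : ℝ) < n := by exact_mod_cast (by omega : 0 < n)
    refine hsub.eventually_div_le_add_of_mul_le hθ hn (by omega) (fun q hq => ?_) hε
    have hmul := apply_mul_le_of_subadditive_of_balanced (φ := fun k => a k + E * (k : ℝ) ^ θ)
      hψ hn q hq
    have : 0 ≤ E * ((q * n : ℕ) : ℝ) ^ θ := by positivity
    calc a (q * n) ≤ q * (a n + E * (n : ℝ) ^ θ) := by linarith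
      _ = q * n * (a n / n + E * ((n : ℝ) ^ θ / n)) := by field_simp
  have habove : IsBoundedUnder (· ≤ ·) atTop fun n => a n / n :=
    isBoundedUnder_of_eventually_le (hupper (m + 1) le_rfl 1 one_pos)
  refine ⟨_, tendsto_of_le_liminf_of_limsup_le le_rfl ?_ habove hbdd⟩
  refine le_of_forall_pos_le_add fun ε hε => ?_
  have hcorr : ∀ᶠ n : ℕ in atTop, m + 1 ≤ n ∧ E * ((n : ℝ) ^ θ / n) < ε / 3 :=
    (eventually_ge_atTop _).and <| ((tendsto_natCast_rpow_div_natCast hθ).const_mul E).eventually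
      (gt_mem_nhds (show E * 0 < ε / 3 by rw [mul_zero]; positivity))
  obtain ⟨n, hn, hnm, hnE⟩ :=
    ((frequently_lt_of_liminf_lt habove.isCoboundedUnder_ge
      (lt_add_of_pos_right _ (by positivity : 0 < ε / 3))).and_eventually hcorr).exists
  have := limsup_le_of_le hbdd.isCoboundedUnder_le (hupper n hnm (ε / 3) (by positivity))
  linarith

end ApproxSubadditive

theorem rpow_mul_logb_two_le {x : ℝ} (hx : 0 ≤ x) :
    x ^ ((3 : ℝ) / 4) * Real.logb 2 x ≤ 8 / Real.log 2 * x ^ ((7 : ℝ) / 8) := by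
  have hlog : Real.log x ≤ 8 * x ^ ((1 : ℝ) / 8) := by
    have := Real.log_le_rpow_div hx (by norm_num : (0 : ℝ) < 1 / 8)
    linarith [show x ^ ((1 : ℝ) / 8) / (1 / 8) = 8 * x ^ ((1 : ℝ) / 8) by ring]
  calc x ^ ((3 : ℝ) / 4) * Real.logb 2 x
      ≤ x ^ ((3 : ℝ) / 4) * (8 * x ^ ((1 : ℝ) / 8) / Real.log 2) := by
        unfold Real.logb
        gcongr
    _ = 8 / Real.log 2 * x ^ ((7 : ℝ) / 8) := by
        rw [show (7 : ℝ) / 8 = 3 / 4 + 1 / 8 by norm_num, Real.rpow_add' hx (by norm_num)]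
        ring

theorem neg_log_le_of_mul_mul_rpow_le {x y z c g : ℝ} (hx : 0 < x) (hy : 0 < y) (hc : 0 < c)
    (h : x * y * c ^ g ≤ z) : -Real.log z ≤ -Real.log x + -Real.log y + -Real.log c * g := by
  have hlog := Real.log_le_log (by positivity) h
  rw [Real.log_mul (by positivity) (by positivity), Real.log_mul hx.ne' hy.ne',
    Real.log_rpow hc] at hlog
  linarith

/-- Generalized subadditive limit theorem.  If `π : ℕ → [0,1]` satisfies
`π (m+n) ≥ π m · π n · c ^ ((m+n)^{3/4} · log₂ (m+n))` for all sufficiently large `m, n`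
(where `0 < c < 1`) and `π n > 0` for all large `n`, then `lim_{n→∞} −(1/n) log π n`
exists in `[0, ∞]` (as an extended real number). -/
theorem neg_log_div_tendsto_of_approx_supermultiplicative
    (π : ℕ → ℝ) (c : ℝ) (hc0 : 0 < c) (hc1 : c < 1)
    (hπ : ∀ n, 0 ≤ π n ∧ π n ≤ 1)
    (hpos : ∃ n₁ : ℕ, ∀ n, n₁ ≤ n → 0 < π n)
    (hsub : ∃ n₀ : ℕ, ∀ m n : ℕ, n₀ ≤ m → n₀ ≤ n →
      π m * π n * c ^ (((m + n : ℕ) : ℝ) ^ ((3 : ℝ) / 4) * Real.logb 2 ((m + n : ℕ) : ℝ))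
        ≤ π (m + n)) :
    ∃ L : EReal, 0 ≤ L ∧
      Tendsto (fun n : ℕ => ((-(1 / (n : ℝ)) * Real.log (π n) : ℝ) : EReal)) atTop (nhds L) := by
  obtain ⟨n₁, hn₁⟩ := hpos
  obtain ⟨n₀, hn₀⟩ := hsub
  have hK : 0 ≤ -Real.log c := neg_nonneg.2 (Real.log_nonpos hc0.le hc1.le)
  have happrox : ApproxSubadditive (fun n => -Real.log (π n)) (max n₀ n₁)
      (-Real.log c * (8 / Real.log 2)) (7 / 8) := by
    intro p q hp hq
    rw [max_le_iff] at hp hq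
    calc _ ≤ _ := neg_log_le_of_mul_mul_rpow_le (hn₁ p hp.2) (hn₁ q hq.2) hc0 (hn₀ p q hp.1 hq.1)
      _ ≤ _ := by
        rw [mul_assoc]
        exact add_le_add_right
          (mul_le_mul_of_nonneg_left (rpow_mul_logb_two_le (Nat.cast_nonneg _)) hK) _
  have hnonneg : ∀ᶠ n : ℕ in atTop, 0 ≤ -Real.log (π n) / n := Eventually.of_forall fun n =>
    div_nonneg (neg_nonneg.2 (Real.log_nonpos (hπ n).1 (hπ n).2)) n.cast_nonneg
  obtain ⟨L, hL⟩ := happrox.tendsto_div (by positivity) (by norm_num)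
    (isBoundedUnder_of_eventually_ge hnonneg)
  refine ⟨L, EReal.coe_nonneg.2 (ge_of_tendsto hL hnonneg), ?_⟩
  convert EReal.tendsto_coe.2 hL using 3
  ring
end

section
/- Let G be a Cayley graph of a finitely generated group with degree d, with at least cubic growth in the sense that there is α > 0 such that the ball of radius r around the identity contains at least α r³ vertices for all r ≥ 1. Then for all sufficiently large finite connected vertex sets A and B containing the identity, with |A| = n and |B| = m, there exists an automorphism γ of G (given by right multiplication by a group element) such that γA is disjoint from B and dist(γA, B) ≤ (n+m)^{3/4}. -/
/-!
If `g ∉ A⁻¹B` then `A·g` misses `B`, and `|A⁻¹B| ≤ |A||B| ≤ (n + m)²`. With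
`R = ⌊(n + m)^{3/4}⌋`, cubic growth gives a ball of radius `R` around `1` with at least
`αR³ ≈ α(n + m)^{9/4} > (n + m)²` elements, so it contains such a `g`; then `1·g ∈ A·g` is within
distance `R` of `1 ∈ B`.
-/

open Set

/-- The (left-)Cayley graph of a group with respect to a generating set `S`
(edges `{u, su}` for `s ∈ S`; `fromRel` symmetrizes, which is harmless for symmetric `S`). -/
def cayleyGraph (G : Type*) [Group G] (S : Set G) : SimpleGraph G :=
  SimpleGraph.fromRel (fun u v => ∃ s ∈ S, v = s * u)

open scoped Pointwise

namespace Set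

variable {G : Type*} [Group G] {A B : Set G}

theorem disjoint_image_mul_right_iff {g : G} :
    Disjoint ((· * g) '' A) B ↔ g ∉ A⁻¹ * B := by
  rw [disjoint_left]
  constructor
  · rintro h ⟨a, ha, b, hb, rfl⟩
    exact h (mem_image_of_mem _ ha) (by simpa using hb)
  · rintro h _ ⟨a, ha, rfl⟩ hag
    exact h ⟨a⁻¹, by simpa using ha, a * g, hag, by group⟩

theorem exists_disjoint_image_mul_right_of_ncard_lt {T : Set G} (hA : A.Finite) (hB : B.Finite)
    (h : A.ncard * B.ncard < T.ncard) : ∃ g ∈ T, Disjoint ((· * g) '' A) B := by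
  have hcard : (A⁻¹ * B).ncard ≤ A.ncard * B.ncard := by
    simpa only [Nat.card_coe_set_eq, ncard_inv] using natCard_mul_le (s := A⁻¹) (t := B)
  obtain ⟨g, hgT, hg⟩ := exists_mem_notMem_of_ncard_lt_ncard (hcard.trans_lt h) (hA.inv.mul hB)
  exact ⟨g, hgT, disjoint_image_mul_right_iff.2 hg⟩

end Set

open Filter in
theorem eventually_sq_lt_mul_floor_rpow_three_fourths_pow_three {α : ℝ} (hα : 0 < α) :
    ∀ᶠ N : ℕ in atTop, (N : ℝ) ^ 2 < α * (⌊(N : ℝ) ^ ((3 : ℝ) / 4)⌋₊ : ℝ) ^ 3 := by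
  have hlarge {y : ℝ} (hy : 0 < y) (c : ℝ) : ∀ᶠ N : ℕ in atTop, c < (N : ℝ) ^ y :=
    ((tendsto_rpow_atTop hy).comp tendsto_natCast_atTop_atTop).eventually_gt_atTop c
  filter_upwards [hlarge (by norm_num : (0 : ℝ) < 3 / 4) 2,
    hlarge (by norm_num : (0 : ℝ) < 1 / 4) (8 / α), eventually_gt_atTop 0] with N hx hroot hN
  set x := (N : ℝ) ^ ((3 : ℝ) / 4)
  have hNpos : (0 : ℝ) < N := by exact_mod_cast hN
  have hx3 : x ^ 3 = (N : ℝ) ^ 2 * (N : ℝ) ^ ((1 : ℝ) / 4) := by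
    rw [← Real.rpow_mul_natCast hNpos.le, ← Real.rpow_two, ← Real.rpow_add hNpos]
    norm_num
  have hfloor : x / 2 ≤ ⌊x⌋₊ := by linarith [Nat.sub_one_lt_floor x]
  rw [div_lt_iff₀' hα] at hroot
  calc (N : ℝ) ^ 2 = (N : ℝ) ^ 2 * 8 / 8 := by ring
    _ < (N : ℝ) ^ 2 * (α * (N : ℝ) ^ ((1 : ℝ) / 4)) / 8 := by gcongr
    _ = α * (x / 2) ^ 3 := by rw [div_pow, hx3]; ring
    _ ≤ α * (⌊x⌋₊ : ℝ) ^ 3 := by gcongr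

theorem exists_disjoint_close_translate_general
    {G : Type*} [Group G] (S : Set G)
    (α : ℝ) (hα : 0 < α)
    (hcubic : ∀ ρ : ℕ, 1 ≤ ρ →
      α * (ρ : ℝ) ^ 3 ≤ ({g : G | (cayleyGraph G S).dist 1 g ≤ ρ}).ncard) :
    ∃ n₀ : ℕ, ∀ A B : Set G, A.Finite → B.Finite → (1 : G) ∈ A → (1 : G) ∈ B →
      ((cayleyGraph G S).induce A).Connected → ((cayleyGraph G S).induce B).Connected →
      n₀ ≤ A.ncard + B.ncard →
      ∃ g : G, Disjoint ((fun a => a * g) '' A) B ∧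
        ∃ a ∈ A, ∃ b ∈ B,
          ((cayleyGraph G S).dist (a * g) b : ℝ)
            ≤ ((A.ncard + B.ncard : ℕ) : ℝ) ^ ((3 : ℝ) / 4) := by
  obtain ⟨n₀, hn₀⟩ :=
    Filter.eventually_atTop.1 (eventually_sq_lt_mul_floor_rpow_three_fourths_pow_three hα)
  refine ⟨n₀, fun A B hA hB hA1 hB1 _ _ hN => ?_⟩
  set N := A.ncard + B.ncard
  set R := ⌊(N : ℝ) ^ ((3 : ℝ) / 4)⌋₊
  have hgrowth : (N : ℝ) ^ 2 < α * (R : ℝ) ^ 3 := hn₀ N hN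
  have hR : 1 ≤ R := Nat.one_le_iff_ne_zero.2 fun h0 => by
    rw [h0, Nat.cast_zero, zero_pow three_ne_zero, mul_zero] at hgrowth
    exact (sq_nonneg _).not_gt hgrowth
  have hAB : (A.ncard * B.ncard : ℝ) ≤ (N : ℝ) ^ 2 := by
    push_cast [N]
    nlinarith
  obtain ⟨g, hg, hdisj⟩ := Set.exists_disjoint_image_mul_right_of_ncard_lt hA hB
    (T := {g : G | (cayleyGraph G S).dist 1 g ≤ R})
    (by exact_mod_cast hAB.trans_lt (hgrowth.trans_le (hcubic R hR)))
  refine ⟨g, hdisj, 1, hA1, 1, hB1, ?_⟩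
  rw [one_mul, SimpleGraph.dist_comm]
  exact (Nat.cast_le.2 hg).trans (Nat.floor_le (by positivity))

/-- In a Cayley graph of degree `d` with at least cubic growth, any two
sufficiently large finite connected sets `A`, `B` containing the identity (of sizes `n`, `m`)
admit a right-translate `A·g` of `A` disjoint from `B` with
`dist(A·g, B) ≤ (n+m)^{3/4}`. -/
theorem exists_disjoint_close_translate
    {G : Type*} [Group G] (S : Set G) (hSfin : S.Finite) (hSsym : ∀ s ∈ S, s⁻¹ ∈ S)
    (hconn : (cayleyGraph G S).Connected)
    (d : ℕ) (hd : S.ncard = d)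
    (α : ℝ) (hα : 0 < α)
    (hcubic : ∀ ρ : ℕ, 1 ≤ ρ →
      α * (ρ : ℝ) ^ 3 ≤ ({g : G | (cayleyGraph G S).dist 1 g ≤ ρ}).ncard) :
    ∃ n₀ : ℕ, ∀ A B : Set G, A.Finite → B.Finite → (1 : G) ∈ A → (1 : G) ∈ B →
      ((cayleyGraph G S).induce A).Connected → ((cayleyGraph G S).induce B).Connected →
      n₀ ≤ A.ncard + B.ncard →
      ∃ g : G, Disjoint ((fun a => a * g) '' A) B ∧
        ∃ a ∈ A, ∃ b ∈ B,
          ((cayleyGraph G S).dist (a * g) b : ℝ)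
            ≤ ((A.ncard + B.ncard : ℕ) : ℝ) ^ ((3 : ℝ) / 4) :=
  exists_disjoint_close_translate_general S α hα hcubic
end

section
/- Let G be a locally finite graph with maximum degree d and anchored Cheeger constant κ' = κ'(G, v₀) > 0 at a vertex v₀. For i.i.d. Bernoulli(p) bond percolation with p > 1/(1 + κ'), there exists γ(p) > 0 such that P_p(|C| = n) ≤ exp(−γ(p) n) for all n ≥ 1, where C is the open cluster of v₀. -/
open MeasureTheory ProbabilityTheory Set
open scoped ENNReal

/-- The subgraph of open edges of `G` in the bond configuration `ω`. -/
def openSubgraph {V : Type*} (G : SimpleGraph V) (ω : Sym2 V → Bool) : SimpleGraph V :=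
  G.deleteEdges {e | ω e = false}

/-- The open cluster of the vertex `v` in the configuration `ω`. -/
def percCluster {V : Type*} (G : SimpleGraph V) (ω : Sym2 V → Bool) (v : V) : Set V :=
  {u | (openSubgraph G ω).Reachable v u}

/-- `P` is i.i.d. Bernoulli(p) bond percolation on `G`: it is a probability measure on bond
configurations whose edge coordinates (over the edges of `G`) are independent and
Bernoulli(p)-distributed. -/
def IsBernoulliPercolation {V : Type*} (G : SimpleGraph V) (p : ℝ≥0∞) (hp : p ≤ 1)
    (P : Measure (Sym2 V → Bool)) : Prop :=
  IsProbabilityMeasure P ∧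
  iIndepFun
    (fun (e : G.edgeSet) (ω : Sym2 V → Bool) => ω (e : Sym2 V)) P ∧
  ∀ e : G.edgeSet, P.map (fun ω => ω (e : Sym2 V)) = (PMF.bernoulli p.toNNReal (by rw [← ENNReal.coe_le_coe, ENNReal.coe_toNNReal (ne_top_of_le_ne_top ENNReal.one_ne_top hp)]; simpa using hp)).toMeasure

/-- The external vertex boundary of a vertex set. -/
def extBoundary {V : Type*} (G : SimpleGraph V) (W : Set V) : Set V :=
  {u | u ∉ W ∧ ∃ v ∈ W, G.Adj u v}

/-!
Fix `q` with `1 / (1 + κ) < q < p` and compare `P_p` with `P_q`. For a finite `W ∋ v₀`, the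
event `C = W` is the intersection of two independent events: every edge of the edge boundary
`∂ₑW` is closed, and the open edges inside `W` connect `W`. The second event is increasing and
is forced by the `|W| - 1` open edges of a spanning tree, so thinning (keep each open edge with
probability `q / p`) shows that lowering `p` to `q` costs at most `(p / q) ^ (|W| - 1)`. The
first event gains exactly `((1 - p) / (1 - q)) ^ |∂ₑW|`, and `|∂ₑW| ≥ |∂W| ≥ κ |W|` when `W` is
connected. Hence `P_p(C = W) ≤ g ^ |W| * P_q(C = W)` with `g = (p / q) ((1 - p) / (1 - q)) ^ κ`,
and `g < 1` because `1 - q < κ q`. Summing over the finitely many connected `W ∋ v₀` of size `n`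
(they lie in the ball of radius `n - 1`) gives `P_p(|C| = n) ≤ g ^ n`.
-/

open Finset

section Thinning

variable {ι : Type*} [Fintype ι]

def cubeWeight (p : ℝ) (σ : ι → Bool) : ℝ :=
  ∏ i, if σ i then p else 1 - p

lemma cubeWeight_nonneg {p : ℝ} (hp₀ : 0 ≤ p) (hp₁ : p ≤ 1) (σ : ι → Bool) :
    0 ≤ cubeWeight p σ :=
  prod_nonneg fun i _ => by split_ifs <;> linarith

lemma sum_prod_bool [DecidableEq ι] (f : ι → Bool → ℝ) :
    ∑ σ : ι → Bool, ∏ i, f i (σ i) = ∏ i, (f i true + f i false) := by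
  simp only [← Fintype.prod_sum, Fintype.sum_bool]

/-- Transition probabilities `s ↦ t` of the coupling that keeps each open coordinate open with
probability `r`: it carries the `p`-weights to the `(r * p)`-weights. -/
def thinningFactor (r : ℝ) : Bool → Bool → ℝ
  | true, true => r
  | true, false => 1 - r
  | false, true => 0
  | false, false => 1

def thinningKernel (r : ℝ) (σ ρ : ι → Bool) : ℝ :=
  ∏ i, thinningFactor r (σ i) (ρ i)

lemma thinningKernel_nonneg {r : ℝ} (hr₀ : 0 ≤ r) (hr₁ : r ≤ 1) (σ ρ : ι → Bool) :
    0 ≤ thinningKernel r σ ρ :=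
  prod_nonneg fun i _ => by
    cases σ i <;> cases ρ i <;> simp only [thinningFactor] <;> linarith

lemma sum_cubeWeight_mul_thinningKernel [DecidableEq ι] {p q : ℝ} (hp : p ≠ 0) (ρ : ι → Bool) :
    ∑ σ, cubeWeight p σ * thinningKernel (q / p) σ ρ = cubeWeight q ρ := by
  simp only [cubeWeight, thinningKernel, ← prod_mul_distrib]
  rw [sum_prod_bool (fun i s => (if s then p else 1 - p) * thinningFactor (q / p) s (ρ i))]
  refine prod_congr rfl fun i _ => ?_
  cases ρ i <;> simp only [thinningFactor, if_true, Bool.false_eq_true, if_false] <;> field_simp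
    <;> ring

lemma sum_thinningKernel_of_forall_mem [DecidableEq ι] {r : ℝ} {σ : ι → Bool} {R : Finset ι}
    (hR : ∀ i ∈ R, σ i = true) :
    ∑ ρ ∈ univ.filter (fun ρ : ι → Bool => ∀ i ∈ R, ρ i = true), thinningKernel r σ ρ
      = r ^ #R := by
  rw [sum_filter]
  have key : ∀ ρ : ι → Bool, (if ∀ i ∈ R, ρ i = true then thinningKernel r σ ρ else 0)
      = ∏ i, (if i ∈ R then (if ρ i then 1 else 0) else 1) * thinningFactor r (σ i) (ρ i) := by
    intro ρ
    rw [prod_mul_distrib, thinningKernel]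
    split_ifs with h
    · have hind : ∀ i, (if i ∈ R then (if ρ i then (1 : ℝ) else 0) else 1) = 1 := fun i => by
        by_cases hi : i ∈ R <;> simp [hi, h i]
      simp only [hind, prod_const_one, one_mul]
    · push Not at h
      obtain ⟨i, hi, hρi⟩ := h
      rw [prod_eq_zero (mem_univ i) (by simp [hi, hρi]), zero_mul]
  simp only [key]
  rw [sum_prod_bool (fun i s => (if i ∈ R then (if s then 1 else 0) else 1) *
    thinningFactor r (σ i) s), ← prod_const, ← univ_inter R, ← prod_ite_mem]
  refine prod_congr rfl fun i _ => ?_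
  by_cases hi : i ∈ R
  · simp [hi, hR i hi, thinningFactor]
  · cases σ i <;> simp [hi, thinningFactor]

lemma sum_cubeWeight_le_of_witnessed {p q : ℝ} (hq : 0 < q) (hqp : q ≤ p) (hp : p ≤ 1)
    (A : Finset (ι → Bool)) (k : ℕ)
    (hA : ∀ σ ∈ A, ∃ R : Finset ι, (∀ i ∈ R, σ i = true) ∧ #R ≤ k ∧
      ∀ ρ : ι → Bool, (∀ i ∈ R, ρ i = true) → ρ ∈ A) :
    ∑ σ ∈ A, cubeWeight p σ ≤ (p / q) ^ k * ∑ σ ∈ A, cubeWeight q σ := by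
  classical
  have hp₀ : 0 < p := hq.trans_le hqp
  set r := q / p
  have hr₀ : 0 ≤ r := by positivity
  have hr₁ : r ≤ 1 := div_le_one_of_le₀ hqp hp₀.le
  have hmass : ∀ σ ∈ A, r ^ k ≤ ∑ ρ ∈ A, thinningKernel r σ ρ := by
    intro σ hσ
    obtain ⟨R, hRσ, hRk, hRA⟩ := hA σ hσ
    calc r ^ k ≤ r ^ #R := pow_le_pow_of_le_one hr₀ hr₁ hRk
      _ = ∑ ρ ∈ univ.filter (fun ρ : ι → Bool => ∀ i ∈ R, ρ i = true), thinningKernel r σ ρ :=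
          (sum_thinningKernel_of_forall_mem hRσ).symm
      _ ≤ ∑ ρ ∈ A, thinningKernel r σ ρ :=
          sum_le_sum_of_subset_of_nonneg (fun ρ hρ => hRA ρ (mem_filter.1 hρ).2)
            fun ρ _ _ => thinningKernel_nonneg hr₀ hr₁ σ ρ
  have hthin : r ^ k * ∑ σ ∈ A, cubeWeight p σ ≤ ∑ ρ ∈ A, cubeWeight q ρ :=
    calc r ^ k * ∑ σ ∈ A, cubeWeight p σ
        ≤ ∑ σ ∈ A, cubeWeight p σ * ∑ ρ ∈ A, thinningKernel r σ ρ := by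
          rw [mul_sum]
          exact sum_le_sum fun σ hσ => by
            rw [mul_comm]
            exact mul_le_mul_of_nonneg_left (hmass σ hσ) (cubeWeight_nonneg hp₀.le hp σ)
      _ = ∑ ρ ∈ A, ∑ σ ∈ A, cubeWeight p σ * thinningKernel r σ ρ := by
          simp only [mul_sum]
          exact sum_comm
      _ ≤ ∑ ρ ∈ A, ∑ σ, cubeWeight p σ * thinningKernel r σ ρ :=
          sum_le_sum fun ρ _ => sum_le_sum_of_subset_of_nonneg (subset_univ A) fun σ _ _ =>
            mul_nonneg (cubeWeight_nonneg hp₀.le hp σ) (thinningKernel_nonneg hr₀ hr₁ σ ρ)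
      _ = ∑ ρ ∈ A, cubeWeight q ρ :=
          sum_congr rfl fun ρ _ => sum_cubeWeight_mul_thinningKernel hp₀.ne' ρ
  have hrk : 0 < r ^ k := pow_pos (by positivity) k
  rw [show p / q = r⁻¹ by rw [inv_div], inv_pow, ← div_eq_inv_mul, le_div_iff₀ hrk, mul_comm]
  exact hthin

end Thinning

section Numerics

lemma exists_comparison_param {κ p : ℝ} (hκ : 0 < κ) (hp : 1 / (1 + κ) < p) (hp₁ : p ≤ 1) :
    ∃ q : ℝ, 0 < q ∧ q < p ∧ p / q * ((1 - p) / (1 - q)) ^ κ < 1 := by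
  have hc : 0 < 1 / (1 + κ) := by positivity
  set q := (p + 1 / (1 + κ)) / 2 with hq
  have hq₀ : 0 < q := by linarith
  have hqp : q < p := by linarith
  have hq₁ : 0 < 1 - q := by linarith
  have hkey : 1 - q < κ * q := by
    have : 1 / (1 + κ) < q := by linarith
    rw [div_lt_iff₀ (by linarith)] at this
    linarith
  refine ⟨q, hq₀, hqp, ?_⟩
  rcases hp₁.eq_or_lt with rfl | hp₁
  · simp [Real.zero_rpow hκ.ne']
  have hB : 0 < (1 - p) / (1 - q) := div_pos (by linarith) hq₁
  rw [← Real.exp_log (div_pos (hq₀.trans hqp) hq₀), ← Real.exp_log hB, ← Real.exp_mul,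
    ← Real.exp_add, Real.exp_lt_one_iff]
  have h₁ : Real.log (p / q) ≤ (p - q) / q := by
    have := Real.log_le_sub_one_of_pos (div_pos (hq₀.trans hqp) hq₀)
    rwa [div_sub_one hq₀.ne'] at this
  have h₂ : Real.log ((1 - p) / (1 - q)) ≤ -((p - q) / (1 - q)) := by
    have := Real.log_le_sub_one_of_pos hB
    rwa [div_sub_one hq₁.ne', show 1 - p - (1 - q) = -(p - q) by ring, neg_div] at this
  have h₃ : (p - q) / q < κ * ((p - q) / (1 - q)) := by
    rw [mul_div_assoc', div_lt_div_iff₀ hq₀ hq₁]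
    nlinarith
  nlinarith

lemma comparison_factor_le {κ p q : ℝ} (hκ : 0 ≤ κ) (hq₀ : 0 < q) (hqp : q ≤ p) (hp₁ : p ≤ 1)
    (hq₁ : q < 1) {n b : ℕ} (hb : κ * n ≤ b) :
    (p / q) ^ (n - 1) * ((1 - p) / (1 - q)) ^ b ≤ (p / q * ((1 - p) / (1 - q)) ^ κ) ^ n := by
  have hA : 1 ≤ p / q := (one_le_div hq₀).2 hqp
  have hB₀ : 0 ≤ (1 - p) / (1 - q) := div_nonneg (by linarith) (by linarith)
  have hB₁ : (1 - p) / (1 - q) ≤ 1 := (div_le_one (by linarith)).2 (by linarith)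
  rw [mul_pow, ← Real.rpow_natCast (_ ^ κ), ← Real.rpow_mul hB₀, ← Real.rpow_natCast _ b]
  exact mul_le_mul (pow_le_pow_right₀ hA (Nat.sub_le n 1))
    (Real.rpow_le_rpow_of_exponent_ge' hB₀ hB₁ (by positivity) hb) (by positivity)
    (by positivity)

lemma pow_le_exp_neg_one_sub_mul {g : ℝ} (hg : 0 ≤ g) (n : ℕ) :
    g ^ n ≤ Real.exp (-(1 - g) * n) := by
  rw [mul_comm, Real.exp_nat_mul]
  exact pow_le_pow_left₀ hg (by simpa using Real.one_sub_le_exp_neg (1 - g)) n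

end Numerics

lemma ENNReal.toReal_le_one_of_le_one {p : ℝ≥0∞} (hp : p ≤ 1) : p.toReal ≤ 1 :=
  ENNReal.toReal_le_of_le_ofReal zero_le_one (by simpa using hp)

lemma measurable_restrict_edges {V : Type*} (S : Finset (Sym2 V)) :
    Measurable fun (ω : Sym2 V → Bool) (e : S) => ω e :=
  measurable_pi_lambda _ fun _ => measurable_pi_apply _

section Percolation
variable {V : Type*} {G : SimpleGraph V} {p : ℝ≥0∞} {hp : p ≤ 1} {P : Measure (Sym2 V → Bool)}

set_option linter.deprecated false in
noncomputable def bernoulliBool (p : ℝ≥0∞) (hp : p ≤ 1) : Measure Bool :=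
  (PMF.bernoulli p.toNNReal
    ((ENNReal.toNNReal_mono ENNReal.one_ne_top hp).trans_eq ENNReal.toNNReal_one)).toMeasure

instance (hp : p ≤ 1) : IsProbabilityMeasure (bernoulliBool p hp) := by
  unfold bernoulliBool; infer_instance

set_option linter.deprecated false in
lemma bernoulliBool_singleton (hp : p ≤ 1) (b : Bool) :
    bernoulliBool p hp {b} = if b then p else 1 - p := by
  have hp' : p ≠ ⊤ := ne_top_of_le_ne_top ENNReal.one_ne_top hp
  rw [bernoulliBool, PMF.toMeasure_apply_singleton _ _ (measurableSet_singleton _),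
    PMF.bernoulli_apply]
  cases b <;> simp [ENNReal.coe_sub, ENNReal.coe_toNNReal hp']

lemma exists_isBernoulliPercolation (G : SimpleGraph V) (p : ℝ≥0∞) (hp : p ≤ 1) :
    ∃ P, IsBernoulliPercolation G p hp P := by
  refine ⟨Measure.infinitePi fun _ => bernoulliBool p hp, inferInstance, ?_, fun e => ?_⟩
  · exact (iIndepFun_infinitePi (X := fun _ => id) fun _ => measurable_id).precomp
      Subtype.val_injective
  · exact Measure.infinitePi_map_eval _ _

lemma IsBernoulliPercolation.map_restrict (hP : IsBernoulliPercolation G p hp P)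
    (S : Finset (Sym2 V)) (hS : ∀ e ∈ S, e ∈ G.edgeSet) :
    P.map (fun ω (e : S) => ω e) = Measure.pi fun _ => bernoulliBool p hp := by
  have := hP.1
  have hindS : iIndepFun (fun (e : S) (ω : Sym2 V → Bool) => ω e) P :=
    hP.2.1.precomp (g := fun e : S => (⟨e, hS e e.2⟩ : G.edgeSet))
      fun e e' h => Subtype.ext (congrArg Subtype.val h :)
  rw [(iIndepFun_iff_map_fun_eq_pi_map fun _ => (measurable_pi_apply _).aemeasurable).1 hindS]
  exact congrArg Measure.pi (funext fun e => hP.2.2 ⟨e, hS e e.2⟩)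

lemma ofReal_cubeWeight_toReal {ι : Type*} [Fintype ι] (hp : p ≤ 1) (σ : ι → Bool) :
    ENNReal.ofReal (cubeWeight p.toReal σ) = ∏ i, if σ i then p else 1 - p := by
  have hp' : p ≠ ⊤ := ne_top_of_le_ne_top ENNReal.one_ne_top hp
  rw [cubeWeight, ENNReal.ofReal_prod_of_nonneg fun i _ => by
    split_ifs <;> simp [ENNReal.toReal_le_one_of_le_one hp]]
  refine Finset.prod_congr rfl fun i _ => ?_
  cases σ i
  · simp [ENNReal.ofReal_sub, ENNReal.ofReal_toReal hp']
  · simp [ENNReal.ofReal_toReal hp']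

lemma IsBernoulliPercolation.measure_restrict_mem (hP : IsBernoulliPercolation G p hp P)
    (S : Finset (Sym2 V)) (hS : ∀ e ∈ S, e ∈ G.edgeSet) (A : Finset (S → Bool)) :
    P ((fun ω (e : S) => ω e) ⁻¹' A) = ENNReal.ofReal (∑ σ ∈ A, cubeWeight p.toReal σ) := by
  rw [← Measure.map_apply (measurable_restrict_edges S) A.measurableSet, hP.map_restrict S hS,
    ← sum_measure_singleton, ENNReal.ofReal_sum_of_nonneg fun σ _ => cubeWeight_nonneg
      ENNReal.toReal_nonneg (ENNReal.toReal_le_one_of_le_one hp) σ]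
  refine Finset.sum_congr rfl fun σ _ => ?_
  rw [ofReal_cubeWeight_toReal hp, ← Set.univ_pi_singleton, Measure.pi_pi]
  simp only [bernoulliBool_singleton]

lemma IsBernoulliPercolation.indepFun_restrict (hP : IsBernoulliPercolation G p hp P)
    {S T : Finset (Sym2 V)} (hS : ∀ e ∈ S, e ∈ G.edgeSet) (hT : ∀ e ∈ T, e ∈ G.edgeSet)
    (hST : Disjoint S T) :
    IndepFun (fun ω (e : S) => ω e) (fun ω (e : T) => ω e) P := by
  classical
  let S' := S.subtype (· ∈ G.edgeSet)
  let T' := T.subtype (· ∈ G.edgeSet)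
  have hST' : Disjoint S' T' := Finset.disjoint_left.2 fun e heS heT =>
    Finset.disjoint_left.1 hST (Finset.mem_subtype.1 heS) (Finset.mem_subtype.1 heT)
  have hind := hP.2.1.indepFun_finset S' T' hST' fun _ => measurable_pi_apply _
  exact hind.comp (φ := fun τ (e : S) => τ ⟨⟨e, hS e e.2⟩, Finset.mem_subtype.2 e.2⟩)
    (ψ := fun τ (e : T) => τ ⟨⟨e, hT e e.2⟩, Finset.mem_subtype.2 e.2⟩)
    (measurable_pi_lambda _ fun _ => measurable_pi_apply _)
    (measurable_pi_lambda _ fun _ => measurable_pi_apply _)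

end Percolation

section Graph
variable {V : Type*} {G : SimpleGraph V} {ω ω' : Sym2 V → Bool}

lemma openSubgraph_adj {x y : V} :
    (openSubgraph G ω).Adj x y ↔ G.Adj x y ∧ ω s(x, y) = true := by
  simp [openSubgraph]

lemma SimpleGraph.Reachable.mem_of_forall_adj_mem {H : SimpleGraph V} {s : Set V}
    (hs : ∀ x ∈ s, ∀ y, H.Adj x y → y ∈ s) {u v : V} (h : H.Reachable u v) (hu : u ∈ s) :
    v ∈ s := by
  obtain ⟨w⟩ := h
  induction w with
  | nil => exact hu
  | cons hadj _ ih => exact ih (hs _ hu _ hadj)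

lemma percCluster_eq_iff {v₀ : V} {W : Set V} (hv₀ : v₀ ∈ W) :
    percCluster G ω v₀ = W ↔
      (∀ x ∈ W, ∀ y, (openSubgraph G ω).Adj x y → y ∈ W) ∧
        ((openSubgraph G ω).induce W).Connected := by
  classical
  constructor
  · rintro rfl
    refine ⟨fun x hx y hxy => hx.trans hxy.reachable, ?_⟩
    refine SimpleGraph.induce_connected_of_patches v₀ hv₀ fun {v} ⟨w⟩ => ?_
    refine ⟨{x | x ∈ w.support}, fun x hx => ⟨w.takeUntil x hx⟩, w.start_mem_support,
      w.end_mem_support, ?_⟩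
    exact w.connected_induce_support.preconnected _ _
  · rintro ⟨hclosed, hconn⟩
    ext u
    refine ⟨fun hu => SimpleGraph.Reachable.mem_of_forall_adj_mem hclosed hu hv₀, fun hu => ?_⟩
    exact (hconn.preconnected ⟨v₀, hv₀⟩ ⟨u, hu⟩).map (SimpleGraph.Embedding.induce W).toHom

open Classical in
noncomputable def innerEdges (G : SimpleGraph V) (W : Finset V) : Finset (Sym2 V) :=
  W.sym2.filter (· ∈ G.edgeSet)

def edgeBoundary (G : SimpleGraph V) [G.LocallyFinite] [DecidableEq V] (W : Finset V) :
    Finset (Sym2 V) :=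
  (W.biUnion fun v => G.incidenceFinset v).filter (· ∉ W.sym2)

lemma mem_innerEdges {W : Finset V} {e : Sym2 V} :
    e ∈ innerEdges G W ↔ e ∈ W.sym2 ∧ e ∈ G.edgeSet := by
  classical
  simp [innerEdges]

lemma mk_mem_innerEdges {W : Finset V} {x y : V} :
    s(x, y) ∈ innerEdges G W ↔ x ∈ W ∧ y ∈ W ∧ G.Adj x y := by
  classical
  simp [innerEdges, and_assoc]

lemma edgeBoundary_subset_edgeSet [G.LocallyFinite] [DecidableEq V] (W : Finset V) :
    ∀ e ∈ edgeBoundary G W, e ∈ G.edgeSet := by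
  intro e he
  obtain ⟨v, -, hv⟩ := Finset.mem_biUnion.1 (Finset.mem_filter.1 he).1
  exact G.incidenceSet_subset v (G.mem_incidenceFinset v e |>.1 hv)

lemma disjoint_innerEdges_edgeBoundary [G.LocallyFinite] [DecidableEq V] (W : Finset V) :
    Disjoint (innerEdges G W) (edgeBoundary G W) :=
  Finset.disjoint_left.2 fun _ hi hb =>
    (Finset.mem_filter.1 hb).2 (mem_innerEdges.1 hi).1

lemma mk_mem_edgeBoundary [G.LocallyFinite] [DecidableEq V] {W : Finset V} {x y : V}
    (hx : x ∈ W) (hy : y ∉ W) (hadj : G.Adj x y) : s(x, y) ∈ edgeBoundary G W :=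
  Finset.mem_filter.2
    ⟨Finset.mem_biUnion.2 ⟨x, hx, (G.mem_incidenceFinset x _).2 ⟨hadj, Sym2.mem_mk_left x y⟩⟩,
      fun h => hy (Finset.mk_mem_sym2_iff.1 h).2⟩

lemma exists_of_mem_edgeBoundary [G.LocallyFinite] [DecidableEq V] {W : Finset V} {e : Sym2 V}
    (he : e ∈ edgeBoundary G W) : ∃ x ∈ W, ∃ y ∉ W, G.Adj x y ∧ e = s(x, y) := by
  obtain ⟨hinc, hout⟩ := Finset.mem_filter.1 he
  obtain ⟨x, hx, hxe⟩ := Finset.mem_biUnion.1 hinc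
  obtain ⟨heG, hxe⟩ := G.mem_incidenceFinset x e |>.1 hxe
  obtain ⟨y, rfl⟩ := Sym2.mem_iff_exists.1 hxe
  exact ⟨x, hx, y, fun hy => hout (Finset.mk_mem_sym2_iff.2 ⟨hx, hy⟩), heG, rfl⟩

lemma forall_adj_mem_iff_edgeBoundary [G.LocallyFinite] [DecidableEq V] {W : Finset V} :
    (∀ x ∈ (W : Set V), ∀ y, (openSubgraph G ω).Adj x y → y ∈ (W : Set V)) ↔
      ∀ e ∈ edgeBoundary G W, ω e = false := by
  constructor
  · intro hclosed e he
    obtain ⟨x, hx, y, hy, hadj, rfl⟩ := exists_of_mem_edgeBoundary he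
    by_contra hopen
    exact hy (hclosed x hx y (openSubgraph_adj.2 ⟨hadj, by simpa using hopen⟩))
  · intro hclosed x hx y hxy
    obtain ⟨hadj, hopen⟩ := openSubgraph_adj.1 hxy
    by_contra hy
    simp [hclosed _ (mk_mem_edgeBoundary hx hy hadj)] at hopen

lemma ncard_extBoundary_le_card_edgeBoundary [G.LocallyFinite] [DecidableEq V] (W : Finset V) :
    (extBoundary G W).ncard ≤ #(edgeBoundary G W) := by
  by_cases hfin : (extBoundary G W).Finite
  · rw [Set.ncard_eq_toFinset_card _ hfin]
    refine Finset.card_le_card_of_forall_subsingleton (fun u e => u ∈ e) (fun u hu => ?_)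
      fun e he u ⟨hu, hue⟩ u' ⟨hu', hue'⟩ => ?_
    · obtain ⟨huW, v, hv, hadj⟩ := hfin.mem_toFinset.1 hu
      exact ⟨s(v, u), mk_mem_edgeBoundary hv huW hadj.symm, Sym2.mem_mk_right v u⟩
    · obtain ⟨x, hx, y, -, -, rfl⟩ := exists_of_mem_edgeBoundary he
      have hux : ∀ {w}, w ∈ hfin.toFinset → w ∈ s(x, y) → w = y := fun hw hwe =>
        (Sym2.mem_iff.1 hwe).resolve_left fun h => (hfin.mem_toFinset.1 hw).1 (h ▸ hx)
      exact (hux hu hue).trans (hux hu' hue').symm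
  · rw [Set.Infinite.ncard hfin]
    exact Nat.zero_le _

lemma induce_openSubgraph_congr {W : Finset V} (h : ∀ e ∈ innerEdges G W, ω e = ω' e) :
    (openSubgraph G ω).induce (W : Set V) = (openSubgraph G ω').induce (W : Set V) := by
  ext x y
  simp only [SimpleGraph.comap_adj, Function.Embedding.subtype_apply, openSubgraph_adj]
  exact and_congr_right fun hadj => by rw [h _ (mk_mem_innerEdges.2 ⟨x.2, y.2, hadj⟩)]

lemma exists_spanning_witness {W : Finset V}
    (h : ((openSubgraph G ω).induce (W : Set V)).Connected) :
    ∃ R ⊆ innerEdges G W, (∀ e ∈ R, ω e = true) ∧ #R + 1 ≤ #W ∧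
      ∀ ω' : Sym2 V → Bool, (∀ e ∈ R, ω' e = true) →
        ((openSubgraph G ω').induce (W : Set V)).Connected := by
  classical
  obtain ⟨T, hTle, hT⟩ := h.exists_isTree_le
  have hTadj : ∀ x y, T.Adj x y → G.Adj x y ∧ ω s(x.1, y.1) = true :=
    fun x y hxy => openSubgraph_adj.1 (hTle hxy)
  set R := T.edgeFinset.image (Sym2.map Subtype.val)
  have hmk : ∀ x y, T.Adj x y → s(x.1, y.1) ∈ R := fun x y hxy =>
    mem_image.2 ⟨s(x, y), SimpleGraph.mem_edgeFinset.2 hxy, rfl⟩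
  have hR : ∀ e ∈ R, ∃ x y, T.Adj x y ∧ e = s(x.1, y.1) := by
    intro e he
    obtain ⟨e', he', rfl⟩ := mem_image.1 he
    induction e' using Sym2.ind with
    | h x y => exact ⟨x, y, SimpleGraph.mem_edgeFinset.1 he', rfl⟩
  refine ⟨R, fun e he => ?_, fun e he => ?_, ?_, fun ω' hω' => hT.connected.mono fun x y hxy => ?_⟩
  · obtain ⟨x, y, hxy, rfl⟩ := hR e he
    exact mk_mem_innerEdges.2 ⟨x.2, y.2, (hTadj x y hxy).1⟩
  · obtain ⟨x, y, hxy, rfl⟩ := hR e he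
    exact (hTadj x y hxy).2
  · calc #R + 1 ≤ #T.edgeFinset + 1 := Nat.add_le_add_right card_image_le 1
      _ = #W := by rw [hT.card_edgeFinset]; simp
  · exact openSubgraph_adj.2 ⟨(hTadj x y hxy).1, hω' _ (hmk x y hxy)⟩

open Classical in
noncomputable def connectingConfigs (G : SimpleGraph V) (W : Finset V) :
    Finset (innerEdges G W → Bool) :=
  univ.filter fun τ =>
    ((openSubgraph G (Function.extend Subtype.val τ fun _ => false)).induce (W : Set V)).Connected

lemma extend_restrict_eq {S : Finset (Sym2 V)} (τ : S → Bool) (e : S) :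
    Function.extend Subtype.val τ (fun _ => false) e = τ e :=
  Subtype.val_injective.extend_apply _ _ e

lemma setOf_connected_eq (W : Finset V) :
    {ω : Sym2 V → Bool | ((openSubgraph G ω).induce (W : Set V)).Connected} =
      (fun ω (e : innerEdges G W) => ω e) ⁻¹' ↑(connectingConfigs G W) := by
  ext ω
  simp only [connectingConfigs, Set.mem_ofPred_eq, Set.mem_preimage, coe_filter]
  rw [induce_openSubgraph_congr (ω' := Function.extend Subtype.val (fun e : innerEdges G W => ω e)
    fun _ => false) fun e he => (extend_restrict_eq (fun e : innerEdges G W => ω e) ⟨e, he⟩).symm]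
  simp

lemma connectingConfigs_witnessed (W : Finset V) :
    ∀ τ ∈ connectingConfigs G W, ∃ R : Finset (innerEdges G W), (∀ i ∈ R, τ i = true) ∧
      #R ≤ #W - 1 ∧ ∀ ρ, (∀ i ∈ R, ρ i = true) → ρ ∈ connectingConfigs G W := by
  classical
  intro τ hτ
  obtain ⟨R, hRinner, hRopen, hRcard, hRforce⟩ :=
    exists_spanning_witness (mem_filter.1 hτ).2
  refine ⟨R.subtype (· ∈ innerEdges G W), fun i hi => ?_, ?_, fun ρ hρ => ?_⟩
  · rw [← extend_restrict_eq τ i]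
    exact hRopen _ (mem_subtype.1 hi)
  · rw [card_subtype]
    have := card_filter_le R (· ∈ innerEdges G W)
    omega
  · refine mem_filter.2 ⟨mem_univ _, hRforce _ fun e he => ?_⟩
    rw [extend_restrict_eq ρ ⟨e, hRinner he⟩]
    exact hρ _ (mem_subtype.2 he)

end Graph

def vertexBall {V : Type*} (G : SimpleGraph V) [G.LocallyFinite] [DecidableEq V] (v : V) :
    ℕ → Finset V
  | 0 => {v}
  | k + 1 => vertexBall G v k ∪ (vertexBall G v k).biUnion fun u => G.neighborFinset u

section Ball
variable {V : Type*} {G : SimpleGraph V} [G.LocallyFinite] [DecidableEq V]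

lemma vertexBall_mono (v : V) : Monotone (vertexBall G v) :=
  monotone_nat_of_le_succ fun _ => Finset.subset_union_left

lemma mem_vertexBall_of_walk {u v : V} (w : G.Walk u v) : u ∈ vertexBall G v w.length := by
  induction w with
  | nil => exact Finset.mem_singleton_self _
  | cons hadj w ih =>
    exact Finset.mem_union_right _
      (Finset.mem_biUnion.2 ⟨_, ih, (G.mem_neighborFinset _ _).2 hadj.symm⟩)

lemma subset_vertexBall_of_connected {v : V} {W : Finset V} (hv : v ∈ W)
    (hW : (G.induce (W : Set V)).Connected) : W ⊆ vertexBall G v (#W - 1) := by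
  intro u hu
  obtain ⟨w, hw⟩ := (hW.preconnected ⟨u, hu⟩ ⟨v, hv⟩).exists_isPath
  have hlen : w.length < #W := by simpa using hw.length_lt
  have := mem_vertexBall_of_walk (w.map (SimpleGraph.Embedding.induce (W : Set V)).toHom)
  rw [SimpleGraph.Walk.length_map] at this
  exact vertexBall_mono v (by omega) this

end Ball

section ClusterLaw
variable {V : Type*} {G : SimpleGraph V} [G.LocallyFinite] [DecidableEq V] {v₀ : V}

lemma setOf_percCluster_eq {W : Finset V} (hv₀ : v₀ ∈ W) :
    {ω | percCluster G ω v₀ = W} =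
      (fun ω (e : edgeBoundary G W) => ω e) ⁻¹'
          ↑({fun _ => false} : Finset (edgeBoundary G W → Bool)) ∩
        (fun ω (e : innerEdges G W) => ω e) ⁻¹' ↑(connectingConfigs G W) := by
  ext ω
  rw [← setOf_connected_eq]
  simp only [Set.mem_ofPred_eq, Set.mem_inter_iff, Set.mem_preimage, Finset.coe_singleton,
    percCluster_eq_iff (Finset.mem_coe.2 hv₀), forall_adj_mem_iff_edgeBoundary,
    Set.mem_singleton_iff, funext_iff, Subtype.forall]

lemma measurableSet_setOf_percCluster_eq (W : Finset V) :
    MeasurableSet {ω | percCluster G ω v₀ = W} := by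
  by_cases hv₀ : v₀ ∈ W
  · rw [setOf_percCluster_eq hv₀]
    exact (measurable_restrict_edges _ (Finset.measurableSet _)).inter
      (measurable_restrict_edges _ (Finset.measurableSet _))
  · convert MeasurableSet.empty
    refine Set.eq_empty_of_forall_notMem fun ω (hω : percCluster G ω v₀ = W) => hv₀ ?_
    have hmem : v₀ ∈ percCluster G ω v₀ := SimpleGraph.Reachable.refl v₀
    rwa [hω, Finset.mem_coe] at hmem

variable {p : ℝ≥0∞} {hp : p ≤ 1} {P : Measure (Sym2 V → Bool)}

lemma IsBernoulliPercolation.measure_percCluster_eq (hP : IsBernoulliPercolation G p hp P)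
    {W : Finset V} (hv₀ : v₀ ∈ W) :
    P {ω | percCluster G ω v₀ = W} = ENNReal.ofReal ((1 - p.toReal) ^ #(edgeBoundary G W) *
      ∑ τ ∈ connectingConfigs G W, cubeWeight p.toReal τ) := by
  have hinner : ∀ e ∈ innerEdges G W, e ∈ G.edgeSet := fun e he => (mem_innerEdges.1 he).2
  rw [setOf_percCluster_eq hv₀]
  refine ((hP.indepFun_restrict (edgeBoundary_subset_edgeSet W) hinner
      (disjoint_innerEdges_edgeBoundary W).symm).measure_inter_preimage_eq_mul _ _
      (Finset.measurableSet _) (Finset.measurableSet _)).trans ?_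
  rw [hP.measure_restrict_mem _ (edgeBoundary_subset_edgeSet W), sum_singleton,
    show cubeWeight p.toReal (fun _ : edgeBoundary G W => false) =
      (1 - p.toReal) ^ #(edgeBoundary G W) by simp [cubeWeight],
    hP.measure_restrict_mem _ hinner, ← ENNReal.ofReal_mul
      (pow_nonneg (sub_nonneg.2 (ENNReal.toReal_le_one_of_le_one hp)) _)]

lemma IsBernoulliPercolation.measure_percCluster_le {q : ℝ≥0∞} {hq : q ≤ 1}
    {Q : Measure (Sym2 V → Bool)} (hP : IsBernoulliPercolation G p hp P)
    (hQ : IsBernoulliPercolation G q hq Q) (hq₀ : 0 < q.toReal) (hqp : q.toReal ≤ p.toReal)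
    (hq₁ : q.toReal < 1) {W : Finset V} (hv₀ : v₀ ∈ W) :
    P {ω | percCluster G ω v₀ = W} ≤ ENNReal.ofReal ((p.toReal / q.toReal) ^ (#W - 1) *
      ((1 - p.toReal) / (1 - q.toReal)) ^ #(edgeBoundary G W)) *
        Q {ω | percCluster G ω v₀ = W} := by
  have hp₁ := ENNReal.toReal_le_one_of_le_one hp
  rw [hP.measure_percCluster_eq hv₀, hQ.measure_percCluster_eq hv₀, ← ENNReal.ofReal_mul
    (mul_nonneg (by positivity) (pow_nonneg (div_nonneg (by linarith) (by linarith)) _))]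
  refine ENNReal.ofReal_le_ofReal ?_
  have hthin :=
    sum_cubeWeight_le_of_witnessed hq₀ hqp hp₁ _ _ (connectingConfigs_witnessed (G := G) W)
  calc (1 - p.toReal) ^ #(edgeBoundary G W) * ∑ τ ∈ connectingConfigs G W, cubeWeight p.toReal τ
      ≤ (1 - p.toReal) ^ #(edgeBoundary G W) * ((p.toReal / q.toReal) ^ (#W - 1) *
          ∑ τ ∈ connectingConfigs G W, cubeWeight q.toReal τ) :=
        mul_le_mul_of_nonneg_left hthin (pow_nonneg (by linarith) _)
    _ = _ := by
        rw [div_pow (1 - p.toReal)]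
        field_simp [(sub_pos.2 hq₁).ne']

lemma IsBernoulliPercolation.measure_percCluster_le_pow {q : ℝ≥0∞} {hq : q ≤ 1}
    {Q : Measure (Sym2 V → Bool)} (hP : IsBernoulliPercolation G p hp P)
    (hQ : IsBernoulliPercolation G q hq Q) (hq₀ : 0 < q.toReal) (hqp : q.toReal < p.toReal)
    {κ : ℝ} (hκ : 0 ≤ κ) {W : Finset V} (hv₀ : v₀ ∈ W) (hbd : κ * #W ≤ #(edgeBoundary G W)) :
    P {ω | percCluster G ω v₀ = W} ≤ ENNReal.ofReal ((p.toReal / q.toReal *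
      ((1 - p.toReal) / (1 - q.toReal)) ^ κ) ^ #W) * Q {ω | percCluster G ω v₀ = W} := by
  have hp₁ := ENNReal.toReal_le_one_of_le_one hp
  refine (hP.measure_percCluster_le hQ hq₀ hqp.le (by linarith) hv₀).trans
    (mul_le_mul_of_nonneg_right (ENNReal.ofReal_le_ofReal ?_) zero_le)
  exact comparison_factor_le hκ hq₀ hqp.le hp₁ (by linarith) hbd

end ClusterLaw

open Classical in
noncomputable def clusterCandidates {V : Type*} (G : SimpleGraph V) [G.LocallyFinite]
    [DecidableEq V] (v₀ : V) (n : ℕ) : Finset (Finset V) :=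
  (vertexBall G v₀ (n - 1)).powerset.filter
    fun W => v₀ ∈ W ∧ #W = n ∧ (G.induce (W : Set V)).Connected

section Candidates
variable {V : Type*} {G : SimpleGraph V} [G.LocallyFinite] [DecidableEq V] {v₀ : V} {n : ℕ}

lemma mem_clusterCandidates {W : Finset V} :
    W ∈ clusterCandidates G v₀ n ↔ v₀ ∈ W ∧ #W = n ∧ (G.induce (W : Set V)).Connected := by
  classical
  refine ⟨fun h => (mem_filter.1 h).2, fun h => mem_filter.2 ⟨mem_powerset.2 ?_, h⟩⟩
  obtain ⟨hv₀, rfl, hconn⟩ := h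
  exact subset_vertexBall_of_connected hv₀ hconn

lemma measure_ncard_percCluster_le_sum (P : Measure (Sym2 V → Bool)) :
    P {ω | (percCluster G ω v₀).Finite ∧ (percCluster G ω v₀).ncard = n} ≤
      ∑ W ∈ clusterCandidates G v₀ n, P {ω | percCluster G ω v₀ = W} := by
  refine (measure_mono fun ω hω => ?_).trans (measure_biUnion_finset_le _ _)
  obtain ⟨hfin, hcard⟩ := hω
  have hC : percCluster G ω v₀ = ↑hfin.toFinset := hfin.coe_toFinset.symm
  have hv₀ : v₀ ∈ hfin.toFinset := hfin.mem_toFinset.2 (SimpleGraph.Reachable.refl v₀)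
  have hconn := ((percCluster_eq_iff (Finset.mem_coe.2 hv₀)).1 hC).2
  refine Set.mem_biUnion (mem_clusterCandidates.2 ⟨hv₀, ?_, ?_⟩) hC
  · rwa [← Set.ncard_eq_toFinset_card _ hfin]
  · exact hconn.mono fun x y (h : ((openSubgraph G ω).induce _).Adj x y) =>
      (openSubgraph_adj.1 h).1

lemma sum_measure_percCluster_eq_le_one (P : Measure (Sym2 V → Bool)) [IsProbabilityMeasure P]
    (𝒮 : Finset (Finset V)) : ∑ W ∈ 𝒮, P {ω | percCluster G ω v₀ = W} ≤ 1 := by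
  rw [← measure_biUnion_finset (fun W _ W' _ hne => Set.disjoint_left.2 fun ω h h' =>
    hne (Finset.coe_injective (h.symm.trans h'))) fun W _ => measurableSet_setOf_percCluster_eq W]
  exact prob_le_one

lemma measure_ncard_percCluster_le (P Q : Measure (Sym2 V → Bool)) [IsProbabilityMeasure Q]
    {c : ℝ≥0∞} (h : ∀ W ∈ clusterCandidates G v₀ n,
      P {ω | percCluster G ω v₀ = W} ≤ c * Q {ω | percCluster G ω v₀ = W}) :
    P {ω | (percCluster G ω v₀).Finite ∧ (percCluster G ω v₀).ncard = n} ≤ c :=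
  calc P {ω | (percCluster G ω v₀).Finite ∧ (percCluster G ω v₀).ncard = n}
      ≤ ∑ W ∈ clusterCandidates G v₀ n, c * Q {ω | percCluster G ω v₀ = W} :=
        (measure_ncard_percCluster_le_sum P).trans (sum_le_sum h)
    _ ≤ c := by
        rw [← mul_sum]
        exact mul_le_of_le_one_right' (sum_measure_percCluster_eq_le_one Q _)

end Candidates

/-- On a locally finite graph of maximum degree `d` with anchored Cheeger
constant `≥ κ > 0` at `v₀`, Bernoulli(p) bond percolation with `p > 1/(1+κ)` has an
exponentially decaying cluster size distribution at `v₀`. -/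
theorem exp_decay_of_weakly_nonamenable
    {V : Type*} (G : SimpleGraph V) (d : ℕ)
    (hdeg : ∀ v : V, (G.neighborSet v).encard ≤ d) (v₀ : V)
    (κ : ℝ) (hκ : 0 < κ)
    (hcheeger : ∀ W : Set V, v₀ ∈ W → W.Finite → (G.induce W).Connected →
      κ * W.ncard ≤ (extBoundary G W).ncard)
    (p : ℝ≥0∞) (hp : p ≤ 1) (hpgt : 1 / (1 + κ) < p.toReal)
    (P : Measure (Sym2 V → Bool)) (hP : IsBernoulliPercolation G p hp P) :
    ∃ γ > (0 : ℝ), ∀ n : ℕ, 1 ≤ n →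
      P {ω | (percCluster G ω v₀).Finite ∧ (percCluster G ω v₀).ncard = n}
        ≤ ENNReal.ofReal (Real.exp (-γ * n)) := by
  classical
  let : G.LocallyFinite := fun v => (Set.finite_of_encard_le_coe (hdeg v)).fintype
  have hp₁ := ENNReal.toReal_le_one_of_le_one hp
  obtain ⟨q, hq₀, hqp, hg⟩ := exists_comparison_param hκ hpgt hp₁
  obtain ⟨Q, hQ⟩ := exists_isBernoulliPercolation G (ENNReal.ofReal q)
    (ENNReal.ofReal_le_one.2 (by linarith))
  have := hQ.1
  have hq : (ENNReal.ofReal q).toReal = q := ENNReal.toReal_ofReal hq₀.le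
  set g := p.toReal / q * ((1 - p.toReal) / (1 - q)) ^ κ
  have hg₀ : 0 ≤ g := mul_nonneg (by positivity)
    (Real.rpow_nonneg (div_nonneg (by linarith) (by linarith)) κ)
  refine ⟨1 - g, by linarith, fun n _ => (measure_ncard_percCluster_le P Q fun W hW => ?_).trans
    (ENNReal.ofReal_le_ofReal (pow_le_exp_neg_one_sub_mul hg₀ n))⟩
  obtain ⟨hv₀, rfl, hconn⟩ := mem_clusterCandidates.1 hW
  have hbd : κ * #W ≤ #(edgeBoundary G W) := by
    simpa using (hcheeger W hv₀ W.finite_toSet hconn).trans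
      (Nat.cast_le.2 (ncard_extBoundary_le_card_edgeBoundary W))
  simpa only [hq] using
    hP.measure_percCluster_le_pow hQ (by rwa [hq]) (by rwa [hq]) hκ.le hv₀ hbd
end

section
/- Consider a critical Galton–Watson branching process (E[N] = 1, N not a.s. equal to 1) with finite-variance progeny distribution N, started from one individual, with total population size S. Then there is a constant c (depending on the law of N) such that P(S = n) ≤ c / n^{3/2} for all n ≥ 1. -/
/-!
Encode the family tree by the walk with steps `X j - 1`: the total progeny `S` is its first
passage time to `-1`. By the cycle lemma at most one of the `n` cyclic rotations of
`(X 0, …, X (n - 1))` has first passage time `n`, and all rotations have the same law, so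
`n P(S = n) ≤ P(X 0 + ⋯ + X (n - 1) = n - 1)`.

A local limit bound finishes the proof. Since `E[X 0] = 1` and `X 0` is not a.s. `1`, the law of
`X 0` has two atoms `u < v`, whence `‖φ(t)‖ ≤ 1 - p_u p_v (1 - cos ((v - u) t))` for its
characteristic function `φ`. Fourier inversion on `ℤ` gives
`P(X 0 + ⋯ + X (n - 1) = k) ≤ (2π)⁻¹ ∫_{-π}^{π} ‖φ‖ⁿ`, which is `O(n^{-1/2})` by comparison with
a Gaussian integral.
-/

open MeasureTheory ProbabilityTheory Finset Complex
open scoped ENNReal Real InnerProductSpace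

/-- `n` is the first time the walk `m ↦ ∑ j < m, (x j - 1)` reaches `-1`. -/
def IsFirstPassageTime (x : ℕ → ℕ) (n : ℕ) : Prop :=
  ∑ j ∈ range n, x j = n - 1 ∧ ∀ m ∈ Ico 1 n, ∑ j ∈ range m, x j ≠ m - 1

namespace IsFirstPassageTime

variable {x y : ℕ → ℕ} {n : ℕ}

theorem le_sum (h : IsFirstPassageTime x n) {m : ℕ} (hm : m < n) : m ≤ ∑ j ∈ range m, x j := by
  induction m with
  | zero => simp
  | succ m ih =>
    have hne := h.2 (m + 1) (mem_Ico.2 ⟨by omega, hm⟩)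
    rw [sum_range_succ] at hne ⊢
    have := ih (by omega)
    omega

theorem congr (h : IsFirstPassageTime x n) (hxy : ∀ j < n, x j = y j) :
    IsFirstPassageTime y n := by
  have hsum : ∀ m ≤ n, ∑ j ∈ range m, x j = ∑ j ∈ range m, y j := fun m hm =>
    sum_congr rfl fun j hj => hxy j (by rw [mem_range] at hj; omega)
  refine ⟨hsum n le_rfl ▸ h.1, fun m hm => ?_⟩
  rw [← hsum m (mem_Ico.1 hm).2.le]
  exact h.2 m hm

theorem of_sInf_eq (hn : 1 ≤ n)
    (h : sInf {m | 1 ≤ m ∧ ∑ j ∈ range m, x j = m - 1} = n) : IsFirstPassageTime x n := by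
  have hne : {m | 1 ≤ m ∧ ∑ j ∈ range m, x j = m - 1}.Nonempty := by
    by_contra hempty
    rw [Set.not_nonempty_iff_eq_empty.1 hempty, Nat.sInf_empty] at h
    omega
  have hmem := h ▸ Nat.sInf_mem hne
  refine ⟨hmem.2, fun m hm hsum => ?_⟩
  have hle : n ≤ m := h ▸ Nat.sInf_le ⟨(mem_Ico.1 hm).1, hsum⟩
  exact absurd (mem_Ico.1 hm).2 (not_lt.2 hle)

/-- Cycle lemma: for `r < r'`, the blocks `[r, r')` and `[r', r + n)` would together carry at
least `n` offspring, while the window `[r, r + n)` carries only `n - 1`. -/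
theorem shift_unique {r r' : ℕ} (h : IsFirstPassageTime (fun j => x (r + j)) n)
    (h' : IsFirstPassageTime (fun j => x (r' + j)) n) (hr : r < n) (hr' : r' < n) : r = r' := by
  wlog hrr' : r ≤ r' generalizing r r'
  · exact (this h' h hr' hr (by omega)).symm
  by_contra hne
  have hfirst := h.le_sum (m := r' - r) (by omega)
  have hsecond := h'.le_sum (m := r + n - r') (by omega)
  have hsplit := sum_range_add (fun j => x (r + j)) (r' - r) (r + n - r')
  rw [show r' - r + (r + n - r') = n by omega] at hsplit
  simp only [← add_assoc, Nat.add_sub_cancel' hrr'] at hsplit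
  have htotal : ∑ j ∈ range n, x (r + j) = n - 1 := h.1
  omega

end IsFirstPassageTime

theorem Finset.sum_range_add_mod {M : Type*} [AddCommMonoid M] (f : ℕ → M) (n r : ℕ) :
    ∑ j ∈ range n, f ((r + j) % n) = ∑ j ∈ range n, f j := by
  rcases n.eq_zero_or_pos with rfl | hn
  · simp
  have : NeZero n := ⟨hn.ne'⟩
  rw [← Fin.sum_univ_eq_sum_range, ← Fin.sum_univ_eq_sum_range]
  calc ∑ i : Fin n, f ((r + i) % n) = ∑ i : Fin n, f ((Fin.ofNat n r + i : Fin n) : ℕ) := by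
        simp [Fin.val_add, Nat.add_mod]
    _ = ∑ i : Fin n, f i := Equiv.sum_comp (Equiv.addLeft (Fin.ofNat n r)) (fun i : Fin n => f i)

theorem iIndepFun.map_fun_comp_eq_pi {Ω ι β : Type*} [MeasurableSpace Ω] [MeasurableSpace β]
    {P : Measure Ω} {X : ι → Ω → β} (hmeas : ∀ i, Measurable (X i)) (hiid : iIndepFun X P)
    {i₀ : ι} (hident : ∀ i, IdentDistrib (X i) (X i₀) P P) {κ : Type*} [Fintype κ] {g : κ → ι}
    (hg : Function.Injective g) :
    P.map (fun ω k => X (g k) ω) = Measure.pi fun _ => P.map (X i₀) := by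
  rw [(hiid.precomp hg).map_fun_eq_pi_map fun k => (hmeas (g k)).aemeasurable]
  exact congrArg Measure.pi (funext fun k => (hident (g k)).map_eq)

section HittingTime

variable {Ω : Type*} [MeasurableSpace Ω] {P : Measure Ω} {X : ℕ → Ω → ℕ}

theorem natCast_mul_measure_sInf_eq_le (hmeas : ∀ j, Measurable (X j)) (hiid : iIndepFun X P)
    (hident : ∀ j, IdentDistrib (X j) (X 0) P P) {n : ℕ} (hn : 1 ≤ n) :
    (n : ℝ≥0∞) * P {ω | sInf {m | 1 ≤ m ∧ ∑ j ∈ range m, X j ω = m - 1} = n}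
      ≤ P {ω | ∑ j ∈ range n, X j ω = n - 1} := by
  have : NeZero n := ⟨by omega⟩
  set A : ℕ → Set Ω := fun r => {ω | IsFirstPassageTime (fun j => X ((r + j) % n) ω) n}
  set rotation : ℕ → Ω → Fin n → ℕ := fun r ω i => X ((r + i) % n) ω
  have hA : ∀ r, A r = rotation r ⁻¹' {y | IsFirstPassageTime (fun j => y (Fin.ofNat n j)) n} :=
    fun r => by ext ω; simp [A, rotation, Nat.add_mod_mod]
  have hrotation_meas : ∀ r, Measurable (rotation r) := fun r =>
    measurable_pi_lambda _ fun i => hmeas _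
  have hA_meas : ∀ r, MeasurableSet (A r) := fun r =>
    hA r ▸ hrotation_meas r MeasurableSet.of_discrete
  have hinj : ∀ r, Function.Injective fun i : Fin n => (r + i) % n := fun r i i' h =>
    Fin.ext (Nat.ModEq.add_left_cancel' r h |>.eq_of_lt_of_lt i.isLt i'.isLt)
  have hA_prob : ∀ r, P (A r) = P (A 0) := by
    intro r
    rw [hA, hA, ← Measure.map_apply (hrotation_meas r) MeasurableSet.of_discrete,
      ← Measure.map_apply (hrotation_meas 0) MeasurableSet.of_discrete,
      iIndepFun.map_fun_comp_eq_pi hmeas hiid hident (hinj r),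
      iIndepFun.map_fun_comp_eq_pi hmeas hiid hident (hinj 0)]
  have hS : {ω | sInf {m | 1 ≤ m ∧ ∑ j ∈ range m, X j ω = m - 1} = n} ⊆ A 0 := fun ω hω =>
    (IsFirstPassageTime.of_sInf_eq hn hω).congr fun j hj => by simp [Nat.mod_eq_of_lt hj]
  have hdisj : Set.PairwiseDisjoint (range n : Set ℕ) A := fun r hr r' hr' hne =>
    Set.disjoint_left.2 fun ω h h' => hne <|
      IsFirstPassageTime.shift_unique (x := fun j => X (j % n) ω) h h'
        (mem_range.1 hr) (mem_range.1 hr')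
  have hsub : ∀ r, A r ⊆ {ω | ∑ j ∈ range n, X j ω = n - 1} := fun r ω hω =>
    (sum_range_add_mod (fun j => X j ω) n r).symm.trans hω.1
  calc (n : ℝ≥0∞) * P {ω | sInf {m | 1 ≤ m ∧ ∑ j ∈ range m, X j ω = m - 1} = n}
      ≤ n * P (A 0) := mul_le_mul_right (measure_mono hS) _
    _ = ∑ r ∈ range n, P (A r) := by simp [hA_prob]
    _ = P (⋃ r ∈ range n, A r) := (measure_biUnion_finset hdisj fun r _ => hA_meas r).symm
    _ ≤ P {ω | ∑ j ∈ range n, X j ω = n - 1} := measure_mono (Set.iUnion₂_subset fun r _ => hsub r)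

end HittingTime

theorem norm_smul_add_smul_le_of_norm_eq_one {E : Type*} [NormedAddCommGroup E]
    [InnerProductSpace ℝ E] {z w : E} (hz : ‖z‖ = 1) (hw : ‖w‖ = 1) {p q : ℝ} (hp : 0 ≤ p)
    (hq : 0 ≤ q) (hpq : p + q ≤ 1) :
    ‖p • z + q • w‖ ≤ p + q - p * q * (1 - ⟪z, w⟫_ℝ) := by
  have hsq : ‖p • z + q • w‖ ^ 2 = (p + q) ^ 2 - 2 * p * q * (1 - ⟪z, w⟫_ℝ) := by
    rw [norm_add_sq_real, norm_smul, norm_smul, real_inner_smul_left, real_inner_smul_right, hz,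
      hw, Real.norm_of_nonneg hp, Real.norm_of_nonneg hq]
    ring
  have hinner : |⟪z, w⟫_ℝ| ≤ 1 := by
    simpa [hz, hw] using abs_real_inner_le_norm z w
  have hc : 0 ≤ p * q * (1 - ⟪z, w⟫_ℝ) :=
    mul_nonneg (mul_nonneg hp hq) (by linarith [(abs_le.1 hinner).2])
  have hc' : p * q * (1 - ⟪z, w⟫_ℝ) ≤ p + q := by
    nlinarith [(abs_le.1 hinner).1, mul_nonneg hp hq, mul_nonneg hp (by linarith : 0 ≤ 1 - q),
      mul_nonneg hq (by linarith : 0 ≤ 1 - p)]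
  rw [← sq_le_sq₀ (norm_nonneg _) (by linarith), hsq]
  nlinarith [mul_nonneg hc (by linarith : 0 ≤ 1 - (p + q))]

theorem Complex.inner_exp_mul_I (a b : ℝ) :
    ⟪exp (a * I), exp (b * I)⟫_ℝ = Real.cos (b - a) := by
  rw [Complex.inner, ← exp_conj, map_mul, conj_ofReal, conj_I, ← exp_add,
    show (b : ℂ) * I + a * -I = (b - a : ℝ) * I by push_cast; ring, exp_ofReal_mul_I_re]

theorem norm_charFun_le_one_sub_measureReal_mul (μ : Measure ℝ) [IsProbabilityMeasure μ]
    {u v : ℝ} (huv : u ≠ v) (t : ℝ) :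
    ‖charFun μ t‖ ≤ 1 - μ.real {u} * μ.real {v} * (1 - Real.cos ((v - u) * t)) := by
  set f : ℝ → ℂ := fun x => exp ((t * x : ℝ) * I)
  have hf : ∀ x, ‖f x‖ = 1 := fun x => norm_exp_ofReal_mul_I _
  have hf_int : Integrable f μ := Integrable.of_bound (by fun_prop) 1 (ae_of_all _ fun x => (hf x).le)
  set s : Set ℝ := ((({u, v} : Finset ℝ)) : Set ℝ)
  have hs : MeasurableSet s := (Finset.finite_toSet _).measurableSet
  have hs_real : μ.real s = μ.real {u} + μ.real {v} := by
    rw [← sum_measureReal_singleton, sum_pair huv]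
  have hsplit : charFun μ t = (μ.real {u} • f u + μ.real {v} • f v) + ∫ x in sᶜ, f x ∂μ := by
    rw [← sum_pair huv (f := fun x => μ.real {x} • f x), ← setIntegral_finset _ hf_int.integrableOn,
      integral_add_compl hs hf_int, charFun_apply_real]
    simp [f]
  have hrest : ‖∫ x in sᶜ, f x ∂μ‖ ≤ 1 - μ.real {u} - μ.real {v} := by
    refine (norm_setIntegral_le_of_norm_le_const (measure_lt_top _ _)
      fun x _ => (hf x).le).trans_eq ?_
    rw [one_mul, measureReal_compl hs, probReal_univ, hs_real]
    ring
  have hpair := norm_smul_add_smul_le_of_norm_eq_one (hf u) (hf v) measureReal_nonneg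
    measureReal_nonneg (hs_real ▸ measureReal_le_one)
  rw [Complex.inner_exp_mul_I, ← mul_sub, mul_comm t] at hpair
  rw [hsplit]
  exact (norm_add_le _ _).trans (by linarith)

theorem integral_exp_intCast_mul_mul_I (m : ℤ) :
    ∫ t in (-π)..π, exp (m * t * I) = (if m = 0 then 2 * π else 0 : ℂ) := by
  split_ifs with hm
  · simp [hm, Complex.real_smul]
    ring
  · have hc : (m * I : ℂ) ≠ 0 := mul_ne_zero (Int.cast_ne_zero.2 hm) I_ne_zero
    simp_rw [show ∀ t : ℝ, (m : ℂ) * t * I = m * I * t from fun t => by ring]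
    rw [integral_exp_mul_complex hc, div_eq_zero_iff, sub_eq_zero]
    left
    rw [show (m * I : ℂ) * π = m * I * (-π : ℝ) + m * (2 * π * I) by push_cast; ring, exp_add,
      exp_int_mul_two_pi_mul_I, mul_one]

section Inversion

variable {Ω : Type*} [MeasurableSpace Ω] {P : Measure Ω} [IsFiniteMeasure P] {Z : Ω → ℤ}

theorem integral_charFun_mul_exp_eq_measureReal (hZ : Measurable Z) (k : ℤ) :
    ∫ t in (-π)..π, charFun (P.map fun ω => (Z ω : ℝ)) t * exp (-(k * t * I))
      = 2 * π * P.real {ω | Z ω = k} := by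
  have hchar : ∀ t : ℝ, charFun (P.map fun ω => (Z ω : ℝ)) t = ∫ ω, exp (t * Z ω * I) ∂P :=
    fun t => by rw [charFun_apply_real, integral_map (by fun_prop) (by fun_prop)]; push_cast; rfl
  have hinner : ∀ ω, ∫ t in (-π)..π, exp (t * Z ω * I) * exp (-(k * t * I))
      = Set.indicator {ω | Z ω = k} (fun _ => (2 * π : ℂ)) ω := by
    intro ω
    simp_rw [← exp_add, show ∀ t : ℝ, (t : ℂ) * Z ω * I + -(k * t * I) = ((Z ω - k : ℤ) : ℂ) * t * I
      from fun t => by push_cast; ring]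
    rw [integral_exp_intCast_mul_mul_I]
    simp [Set.indicator_apply, sub_eq_zero]
  simp_rw [hchar, ← integral_mul_const]
  rw [intervalIntegral_integral_swap, integral_congr_ae (ae_of_all _ hinner),
    integral_indicator_const (s := {ω | Z ω = k}) _ (hZ (measurableSet_singleton k))]
  · simp [mul_comm]
  · rw [Set.uIoc_of_le (by linarith [Real.pi_pos])]
    have hmeas : Measurable fun p : ℝ × Ω => exp (p.1 * Z p.2 * I) * exp (-(k * p.1 * I)) := by
      fun_prop
    refine Integrable.of_bound hmeas.aestronglyMeasurable 1 (ae_of_all _ fun p => ?_)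
    simp [Function.uncurry_def, norm_exp]

theorem two_pi_mul_measureReal_le_integral_norm_charFun (hZ : Measurable Z) (k : ℤ) :
    2 * π * P.real {ω | Z ω = k}
      ≤ ∫ t in (-π)..π, ‖charFun (P.map fun ω => (Z ω : ℝ)) t‖ := by
  calc 2 * π * P.real {ω | Z ω = k}
      = ‖∫ t in (-π)..π, charFun (P.map fun ω => (Z ω : ℝ)) t * exp (-(k * t * I))‖ := by
        rw [integral_charFun_mul_exp_eq_measureReal hZ, ← ofReal_ofNat, ← ofReal_mul,
          ← ofReal_mul, norm_real, Real.norm_of_nonneg (by positivity)]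
    _ ≤ ∫ t in (-π)..π, ‖charFun (P.map fun ω => (Z ω : ℝ)) t * exp (-(k * t * I))‖ :=
        intervalIntegral.norm_integral_le_integral_norm (by linarith [Real.pi_pos])
    _ = ∫ t in (-π)..π, ‖charFun (P.map fun ω => (Z ω : ℝ)) t‖ := by simp [norm_exp]

end Inversion

theorem Function.Periodic.intervalIntegral_comp_natCast_mul {E : Type*} [NormedAddCommGroup E]
    [NormedSpace ℝ E] {f : ℝ → E} {T : ℝ} (hf : Function.Periodic f T)
    (hint : ∀ a b, IntervalIntegrable f volume a b) {D : ℕ} (hD : D ≠ 0) (t : ℝ) :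
    ∫ x in t..t + T, f (D * x) = ∫ x in t..t + T, f x := by
  rw [intervalIntegral.integral_comp_mul_left f (Nat.cast_ne_zero.2 hD), mul_add,
    show (D : ℝ) * T = (D : ℤ) • T by simp, hf.intervalIntegral_add_zsmul_eq D _ hint,
    hf.intervalIntegral_add_eq (D * t) t, natCast_zsmul, ← Nat.cast_smul_eq_nsmul ℝ, smul_smul,
    inv_mul_cancel₀ (Nat.cast_ne_zero.2 hD), one_smul]

theorem integral_exp_neg_mul_one_sub_cos_le {c : ℝ} (hc : 0 < c) {D : ℕ} (hD : D ≠ 0) :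
    ∫ t in (-π)..π, Real.exp (-c * (1 - Real.cos (D * t))) ≤ √(π ^ 3 / (2 * c)) := by
  have hπ := Real.pi_pos
  set g : ℝ → ℝ := fun s => Real.exp (-c * (1 - Real.cos s))
  have hg_cont : Continuous g := by fun_prop
  have hg_per : Function.Periodic g (2 * π) := fun s => by simp [g]
  set b : ℝ := 2 * c / π ^ 2
  have hb : 0 < b := by positivity
  have hg_le : ∀ s ∈ Set.Icc (-π) π, g s ≤ Real.exp (-b * s ^ 2) := fun s hs => by
    have hcos := Real.cos_le_one_sub_mul_cos_sq (abs_le.2 hs)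
    refine Real.exp_le_exp.2 ?_
    have : b * s ^ 2 = c * (2 / π ^ 2 * s ^ 2) := by ring
    nlinarith
  calc ∫ t in (-π)..π, g (D * t) = ∫ s in (-π)..π, g s := by
        have := hg_per.intervalIntegral_comp_natCast_mul (fun _ _ => hg_cont.intervalIntegrable _ _)
          hD (-π)
        rwa [show -π + 2 * π = π by ring] at this
    _ ≤ ∫ s in (-π)..π, Real.exp (-b * s ^ 2) :=
        intervalIntegral.integral_mono_on (by linarith) (hg_cont.intervalIntegrable _ _)
          (Continuous.intervalIntegrable (by fun_prop) _ _) hg_le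
    _ ≤ ∫ s, Real.exp (-b * s ^ 2) := by
        rw [intervalIntegral.integral_of_le (by linarith)]
        exact setIntegral_le_integral (integrable_exp_neg_mul_sq hb)
          (ae_of_all _ fun s => (Real.exp_pos _).le)
    _ = √(π ^ 3 / (2 * c)) := by
        rw [integral_gaussian]
        congr 1
        simp only [b]
        field_simp

theorem iIndepFun.charFun_map_fun_sum_range_eq_pow {Ω E : Type*} [MeasurableSpace Ω]
    {P : Measure Ω} [IsFiniteMeasure P] [MeasurableSpace E] [NormedAddCommGroup E]
    [InnerProductSpace ℝ E] [BorelSpace E] [SecondCountableTopology E] {X : ℕ → Ω → E}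
    (hmeas : ∀ j, Measurable (X j)) (hiid : iIndepFun X P)
    (hident : ∀ j, IdentDistrib (X j) (X 0) P P) (n : ℕ) :
    charFun (P.map fun ω => ∑ j ∈ range n, X j ω) = charFun (P.map (X 0)) ^ n := by
  rw [hiid.precomp Subtype.val_injective |>.charFun_map_fun_finsetSum_eq_prod
      fun j _ => (hmeas j).aemeasurable,
    prod_congr rfl fun j _ => by rw [(hident j).map_eq], prod_const, card_range]

theorem integral_norm_charFun_pow_le (μ : Measure ℝ) [IsProbabilityMeasure μ] {u v : ℕ}
    (huv : u < v) (ha : 0 < μ.real {(u : ℝ)} * μ.real {(v : ℝ)}) {n : ℕ} (hn : n ≠ 0) :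
    ∫ t in (-π)..π, ‖charFun μ t‖ ^ n
      ≤ √(π ^ 3 / (2 * (μ.real {(u : ℝ)} * μ.real {(v : ℝ)}))) / √n := by
  set a := μ.real {(u : ℝ)} * μ.real {(v : ℝ)}
  have hn' : (0 : ℝ) < n := by exact_mod_cast Nat.pos_of_ne_zero hn
  have hnorm : ∀ t, ‖charFun μ t‖ ^ n ≤ Real.exp (-(n * a) * (1 - Real.cos ((v - u : ℕ) * t))) :=
    fun t => by
    have hφ := norm_charFun_le_one_sub_measureReal_mul μ (Nat.cast_injective.ne huv.ne) t
    calc ‖charFun μ t‖ ^ n ≤ Real.exp (-(a * (1 - Real.cos ((v - u : ℕ) * t)))) ^ n := by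
          gcongr
          rw [Nat.cast_sub huv.le]
          linarith [Real.add_one_le_exp (-(a * (1 - Real.cos ((v - u : ℝ) * t))))]
      _ = _ := by rw [← Real.exp_nat_mul]; ring_nf
  calc ∫ t in (-π)..π, ‖charFun μ t‖ ^ n
      ≤ ∫ t in (-π)..π, Real.exp (-(n * a) * (1 - Real.cos ((v - u : ℕ) * t))) :=
        intervalIntegral.integral_mono_on (by linarith [Real.pi_pos])
          ((continuous_charFun.norm.pow n).intervalIntegrable _ _)
          (Continuous.intervalIntegrable (by fun_prop) _ _) fun t _ => hnorm t
    _ ≤ √(π ^ 3 / (2 * (n * a))) := integral_exp_neg_mul_one_sub_cos_le (by positivity) (by omega)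
    _ = √(π ^ 3 / (2 * a)) / √n := by
        rw [← Real.sqrt_div' _ hn'.le]
        congr 1
        field_simp

section LocalBound

variable {Ω : Type*} [MeasurableSpace Ω] {P : Measure Ω} [IsProbabilityMeasure P]

theorem exists_two_atoms_of_lintegral_eq_one {Y : Ω → ℕ} (hmean : ∫⁻ ω, (Y ω : ℝ≥0∞) ∂P = 1)
    (hnondeg : ¬ ∀ᵐ ω ∂P, Y ω = 1) :
    ∃ u v, u < v ∧ 0 < P {ω | Y ω = u} ∧ 0 < P {ω | Y ω = v} := by
  have hae : ∀ u, (∀ k ≠ u, P {ω | Y ω = k} = 0) → ∀ᵐ ω ∂P, Y ω = u := fun u h =>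
    ae_iff.2 ((measure_preimage_eq_zero_iff_of_countable (Set.to_countable {u}ᶜ)).2 h)
  obtain ⟨v, hv1, hv⟩ : ∃ v ≠ 1, 0 < P {ω | Y ω = v} := by
    by_contra! h
    exact hnondeg (hae 1 fun k hk => nonpos_iff_eq_zero.1 (h k hk))
  obtain ⟨u, huv, hu⟩ : ∃ u ≠ v, 0 < P {ω | Y ω = u} := by
    by_contra! h
    have hmean_v : ∫⁻ ω, (Y ω : ℝ≥0∞) ∂P = v := by
      rw [lintegral_congr_ae ((hae v fun k hk => nonpos_iff_eq_zero.1 (h k hk)).mono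
        fun ω hω => by rw [hω]), lintegral_const, measure_univ, mul_one]
    exact hv1 (by exact_mod_cast hmean_v.symm.trans hmean)
  rcases lt_or_gt_of_ne huv with h | h
  exacts [⟨u, v, h, hu, hv⟩, ⟨v, u, h, hv, hu⟩]

theorem exists_measureReal_sum_range_eq_le_div_sqrt {X : ℕ → Ω → ℕ}
    (hmeas : ∀ j, Measurable (X j)) (hiid : iIndepFun X P)
    (hident : ∀ j, IdentDistrib (X j) (X 0) P P) {u v : ℕ} (huv : u < v)
    (hu : 0 < P {ω | X 0 ω = u}) (hv : 0 < P {ω | X 0 ω = v}) :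
    ∃ K : ℝ, ∀ n ≠ 0, ∀ k : ℕ, P.real {ω | ∑ j ∈ range n, X j ω = k} ≤ K / √n := by
  set μ : Measure ℝ := P.map fun ω => (X 0 ω : ℝ)
  have : IsProbabilityMeasure μ := Measure.isProbabilityMeasure_map (by fun_prop)
  have hatom : ∀ w : ℕ, 0 < P {ω | X 0 ω = w} → 0 < μ.real {(w : ℝ)} := fun w hw => by
    rw [map_measureReal_apply (by fun_prop) (measurableSet_singleton _)]
    refine ENNReal.toReal_pos (ne_of_gt ?_) (measure_ne_top _ _)
    convert hw using 2
    ext ω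
    simp
  have ha := mul_pos (hatom u hu) (hatom v hv)
  refine ⟨√(π ^ 3 / (2 * (μ.real {(u : ℝ)} * μ.real {(v : ℝ)}))) / (2 * π), fun n hn k => ?_⟩
  have hsum := iIndepFun.charFun_map_fun_sum_range_eq_pow (X := fun j ω => (X j ω : ℝ))
    (fun j => by fun_prop) (hiid.comp (fun _ => Nat.cast) fun _ => by fun_prop)
    (fun j => (hident j).comp (by fun_prop)) n
  have hinv := two_pi_mul_measureReal_le_integral_norm_charFun (P := P)
    (Z := fun ω => ((∑ j ∈ range n, X j ω : ℕ) : ℤ)) (by fun_prop) k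
  simp only [Nat.cast_inj] at hinv
  push_cast at hinv
  simp only [hsum, Pi.pow_apply, norm_pow] at hinv
  have hπ := Real.pi_pos
  calc P.real {ω | ∑ j ∈ range n, X j ω = k}
      = (2 * π)⁻¹ * (2 * π * P.real {ω | ∑ j ∈ range n, X j ω = k}) := by field_simp
    _ ≤ (2 * π)⁻¹ * (√(π ^ 3 / (2 * (μ.real {(u : ℝ)} * μ.real {(v : ℝ)}))) / √n) := by
        gcongr
        exact hinv.trans (integral_norm_charFun_pow_le μ huv ha hn)
    _ = _ := by ring

end LocalBound

theorem critical_GW_total_size_polynomial_bound_general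
    {Ω : Type*} [MeasurableSpace Ω] (P : Measure Ω) [IsProbabilityMeasure P]
    (X : ℕ → Ω → ℕ) (hmeas : ∀ j, Measurable (X j))
    (hiid : iIndepFun X P)
    (hident : ∀ j, IdentDistrib (X j) (X 0) P P)
    (hcrit : ∫⁻ ω, (X 0 ω : ℝ≥0∞) ∂P = 1)
    (hnondeg : ¬ (∀ᵐ ω ∂P, X 0 ω = 1)) :
    ∃ c : ℝ, ∀ n : ℕ, 1 ≤ n →
      P {ω | sInf {m : ℕ | 1 ≤ m ∧ ∑ j ∈ Finset.range m, X j ω = m - 1} = n}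
        ≤ ENNReal.ofReal (c / (n : ℝ) ^ ((3 : ℝ) / 2)) := by
  obtain ⟨u, v, huv, hu, hv⟩ := exists_two_atoms_of_lintegral_eq_one hcrit hnondeg
  obtain ⟨K, hK⟩ := exists_measureReal_sum_range_eq_le_div_sqrt hmeas hiid hident huv hu hv
  refine ⟨K, fun n hn => ?_⟩
  have hn' : (0 : ℝ) < n := by exact_mod_cast hn
  have hcycle := ENNReal.toReal_mono (measure_ne_top _ _)
    (natCast_mul_measure_sInf_eq_le hmeas hiid hident hn)
  rw [ENNReal.toReal_mul, ENNReal.toReal_natCast] at hcycle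
  rw [← ofReal_measureReal]
  refine ENNReal.ofReal_le_ofReal ?_
  rw [show (3 : ℝ) / 2 = 1 + 1 / 2 by norm_num, Real.rpow_add hn', Real.rpow_one,
    ← Real.sqrt_eq_rpow, div_mul_eq_div_div_swap, le_div_iff₀ hn', mul_comm]
  exact hcycle.trans (hK n (by omega) (n - 1))

/-- Critical Galton–Watson total progeny, via the standard random-walk
(hitting time) representation: the total population size starting from one individual is
`S = inf{ n ≥ 1 : X 0 + ⋯ + X (n-1) = n - 1 }` for the i.i.d. offspring numbers `(X j)`.
If `E[X 0] = 1`, `X 0` is not a.s. equal to `1`, and `X 0` has a finite second moment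
(equivalently finite variance), then `P(S = n) ≤ c / n^{3/2}` for all `n ≥ 1`. -/
theorem critical_GW_total_size_polynomial_bound
    {Ω : Type*} [MeasurableSpace Ω] (P : Measure Ω) [IsProbabilityMeasure P]
    (X : ℕ → Ω → ℕ) (hmeas : ∀ j, Measurable (X j))
    (hiid : iIndepFun X P)
    (hident : ∀ j, IdentDistrib (X j) (X 0) P P)
    (hcrit : ∫⁻ ω, (X 0 ω : ℝ≥0∞) ∂P = 1)
    (hnondeg : ¬ (∀ᵐ ω ∂P, X 0 ω = 1))
    (hvar : ∫⁻ ω, ((X 0 ω : ℝ≥0∞)) ^ 2 ∂P < ⊤) :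
    ∃ c : ℝ, ∀ n : ℕ, 1 ≤ n →
      P {ω | sInf {m : ℕ | 1 ≤ m ∧ ∑ j ∈ Finset.range m, X j ω = m - 1} = n}
        ≤ ENNReal.ofReal (c / (n : ℝ) ^ ((3 : ℝ) / 2)) :=
  critical_GW_total_size_polynomial_bound_general P X hmeas hiid hident hcrit hnondeg
end
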